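/- arXiv:1706.01352 — 7 statements merged into one kernel-verified Lean document; each statement's English description precedes it below -/
import Mathlib

section
/- Continuous dependence on initial data and forcing (abstract form of the paper's Theorem 3.5): Consider the abstract damped wave system with a Helmholtz projection P (with Poincaré constant C_P) and with the form r bounded by the constant ρ. Let α ∈ (0,1), M > 0, C₀ > 0, c₀ ≥ 0, and suppose the damping map G : V → V satisfies: (i) ⟨G(v) − G(w), v − w⟩ ≥ 0 for all v, w ∈ V, and (ii) for every δ > 0 and all v, w ∈ V, ‖v − w‖² + ‖G(v) − G(w)‖² ≤ (2M + (2C₀)^{1/α} δ^{−1/α}) ⟨G(v) − G(w), v − w⟩ + c₀ δ^{1/(1−α)}. Then there exist constants C > 0 and δ* > 0, depending only on c₁, c₂, C_P, ρ, M, C₀, c₀, α, β, ε, with the following property: if φ₁ and φ₂ are solutions with continuous forcings F₁ and F₂ respectively, E(t) = (1/2) a(ψ'(t), ψ'(t)) + (β/(2ε²)) ‖D ψ(t)‖² denotes the energy of the difference ψ = φ₁ − φ₂, and δ₁ ≥ 0, 0 ≤ δ₂ ≤ δ* satisfy E(0) ≤ δ₁ and ‖F₁(t) − F₂(t)‖²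 ≤ δ₂ for all t ≥ 0, then E(t) ≤ 3 δ₁ + C δ₂^{α/(2−α)} for all t ≥ 0. -/
/-!
The difference `ψ = φ₁ - φ₂` solves the same equation with damping `g = G(φ₁') - G(φ₂')` and
forcing `f = F₁ - F₂`. Its energy `E` dissipates only through `⟪g, ψ'⟫`, which controls `ψ'` but
not `Dψ`. Adding the cross term `η a(ψ', Pψ)` gives a Lyapunov function `L` with `|L - E| ≤ E / 2`;
testing the equation with `Pψ` (which has `D(Pψ) = Dψ`) supplies the missing `-‖Dψ‖²`, so that
`L' ≤ -μ L + A₀` and Grönwall yields `E ≤ 3 E(0) + 2 A₀ / μ`.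

For a fixed `δ` the damping bound reads `‖ψ'‖² + ‖g‖² ≤ K ⟪g, ψ'⟫ + R` with `K ~ δ^(-1/α)` and
`R ~ δ^(1/(1-α))`. Taking `η, μ ~ 1/K` makes `A₀ / μ ~ K² ‖f‖² + R`, and
`δ = δ₂^(α(1-α)/(2-α))` balances both terms at `δ₂^(α/(2-α))`. The case `δ₂ = 0` follows by
letting `δ₂ → 0`.
-/

open scoped RealInnerProductSpace
open Filter Topology Set

lemma mul_le_half_mul_sq_add_sq_div {x y ε : ℝ} (hε : 0 < ε) :
    x * y ≤ (ε * x ^ 2 + y ^ 2 / ε) / 2 := by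
  have h : (ε * x ^ 2 + y ^ 2 / ε) / 2 - x * y = (ε * x - y) ^ 2 / (2 * ε) := by
    field_simp
    ring
  nlinarith [h, div_nonneg (sq_nonneg (ε * x - y)) (by positivity : (0:ℝ) ≤ 2 * ε)]

lemma isLinearMap_of_add_smul {V : Type*} [AddCommGroup V] [Module ℝ V] {f : V → ℝ}
    (hf : ∀ (s : ℝ) (u v : V), f (u + s • v) = f u + s * f v) : IsLinearMap ℝ f := by
  have h0 : f 0 = 0 := by simpa using hf 1 0 0
  refine ⟨fun u v => by simpa using hf 1 u v, fun s v => by simpa [h0] using hf s 0 v⟩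

lemma exists_continuousBilinear_eq {V : Type*} [SeminormedAddCommGroup V] [NormedSpace ℝ V]
    {a : V → V → ℝ} {c : ℝ} (hc : 0 ≤ c)
    (ha_bilin : ∀ (s : ℝ) (u v w : V), a (u + s • v) w = a u w + s * a v w)
    (ha_symm : ∀ u v, a u v = a v u) (ha_nonneg : ∀ v, 0 ≤ a v v)
    (ha_upper : ∀ v, a v v ≤ c * ‖v‖ ^ 2) :
    ∃ A : V →L[ℝ] V →L[ℝ] ℝ, a = fun u v => A u v := by
  have hlin (w : V) : IsLinearMap ℝ (a · w) := isLinearMap_of_add_smul (ha_bilin · · · w)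
  let B : LinearMap.BilinForm ℝ V := LinearMap.mk₂ ℝ a (fun u v w => (hlin w).map_add u v)
    (fun s u w => (hlin w).map_smul s u)
    (fun u v w => by simp only [ha_symm u]; exact (hlin u).map_add v w)
    (fun s u w => by simp only [ha_symm u]; exact (hlin u).map_smul s w)
  refine ⟨B.mkContinuous₂ c fun u v => ?_, rfl⟩
  have hcs : a u v ^ 2 ≤ (c * ‖u‖ * ‖v‖) ^ 2 := calc
    a u v ^ 2 = B u v * B v u := by rw [sq]; exact congrArg _ (ha_symm u v)
    _ ≤ B u u * B v v := B.apply_mul_apply_le_of_forall_zero_le ha_nonneg u v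
    _ ≤ (c * ‖u‖ ^ 2) * (c * ‖v‖ ^ 2) :=
      mul_le_mul (ha_upper u) (ha_upper v) (ha_nonneg v) (le_trans (ha_nonneg u) (ha_upper u))
    _ = (c * ‖u‖ * ‖v‖) ^ 2 := by ring
  rw [Real.norm_eq_abs]
  exact abs_le_of_sq_le_sq hcs (by positivity)

lemma le_max_of_hasDerivAt_le_neg_mul_add {L L' : ℝ → ℝ} {μ A : ℝ} (hμ : 0 < μ)
    (hL : ∀ t, 0 ≤ t → HasDerivAt L (L' t) t) (hineq : ∀ t, 0 ≤ t → L' t ≤ -μ * L t + A)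
    {t : ℝ} (ht : 0 ≤ t) : L t ≤ max (L 0) (A / μ) := by
  have hgron := le_gronwallBound_of_liminf_deriv_right_le (f := L) (f' := L') (δ := L 0)
    (K := -μ) (ε := A) (a := 0) (b := t)
    (fun s hs => (hL s hs.1).continuousAt.continuousWithinAt)
    (fun s hs _ hr => (hL s hs.1).hasDerivWithinAt.liminf_right_slope_le hr) le_rfl
    (fun s hs => hineq s hs.1) t ⟨ht, le_rfl⟩
  have hbound : gronwallBound (L 0) (-μ) A (t - 0)
      = Real.exp (-μ * t) * L 0 + (1 - Real.exp (-μ * t)) * (A / μ) := by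
    rw [gronwallBound_of_K_ne_0 (neg_ne_zero.mpr hμ.ne'), sub_zero]
    field_simp
    ring
  set e := Real.exp (-μ * t)
  have he₀ : 0 ≤ e := (Real.exp_pos _).le
  have he₁ : e ≤ 1 := Real.exp_le_one_iff.mpr (by nlinarith)
  calc L t ≤ e * L 0 + (1 - e) * (A / μ) := hbound ▸ hgron
    _ ≤ e * max (L 0) (A / μ) + (1 - e) * max (L 0) (A / μ) := by
      gcongr
      · exact le_max_left _ _
      · exact le_max_right _ _
    _ = max (L 0) (A / μ) := by ring

lemma le_of_forall_le_add_mul_rpow {x y C e : ℝ} (he : 0 < e)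
    (h : ∀ δ : ℝ, 0 < δ → δ ≤ 1 → x ≤ y + C * δ ^ e) : x ≤ y := by
  have hlim : Tendsto (fun δ : ℝ => y + C * δ ^ e) (𝓝[>] 0) (𝓝 (y + C * 0 ^ e)) :=
    ((Real.continuousAt_rpow_const 0 e (Or.inr he.le)).const_mul C).const_add y
      |>.tendsto.mono_left nhdsWithin_le_nhds
  rw [Real.zero_rpow he.ne', mul_zero, add_zero] at hlim
  refine ge_of_tendsto hlim ?_
  filter_upwards [Ioc_mem_nhdsGT zero_lt_one] with δ hδ using h δ hδ.1 hδ.2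

lemma eventually_mul_le (X : ℝ) {Y : ℝ} (hY : 0 < Y) : ∀ᶠ θ in 𝓝[>] (0 : ℝ), θ * X ≤ Y := by
  have h : Tendsto (fun θ : ℝ => θ * X) (𝓝 0) (𝓝 0) :=
    (continuous_mul_const X).tendsto' 0 0 (zero_mul X)
  exact nhdsWithin_le_nhds (h.eventually (eventually_le_nhds hY))

section DampedWave

variable {V W : Type*} [NormedAddCommGroup V] [InnerProductSpace ℝ V]
  [NormedAddCommGroup W] [InnerProductSpace ℝ W]

lemma apply_proj_self {A : V →L[ℝ] V →L[ℝ] ℝ} {P : V →L[ℝ] V} (hA : ∀ u v, A u v = A v u)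
    (hP : ∀ v, A (P v) (v - P v) = 0) (v : V) : A v (P v) = A (P v) (P v) := by
  have h := hP v
  rwa [map_sub, sub_eq_zero, hA] at h

lemma apply_proj_le {A : V →L[ℝ] V →L[ℝ] ℝ} {P : V →L[ℝ] V} (hA : ∀ u v, A u v = A v u)
    (hA_nonneg : ∀ v, 0 ≤ A v v) (hP : ∀ v, A (P v) (v - P v) = 0) (v : V) :
    A (P v) (P v) ≤ A v v := by
  have h := hA_nonneg (v - P v)
  simp only [map_sub, sub_apply, apply_proj_self hA hP, hA (P v) v] at h
  linarith

lemma abs_apply_le_half_add {A : V →L[ℝ] V →L[ℝ] ℝ} (hA : ∀ u v, A u v = A v u)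
    (hA_nonneg : ∀ v, 0 ≤ A v v) (u v : V) : |A u v| ≤ (A u u + A v v) / 2 := by
  have h₁ := hA_nonneg (u - v)
  have h₂ := hA_nonneg (u + v)
  simp only [map_sub, map_add, sub_apply, add_apply, hA v u] at h₁ h₂
  exact abs_le.mpr ⟨by linarith, by linarith⟩

structure IsDampedWaveSystem (A : V →L[ℝ] V →L[ℝ] ℝ) (r : V → V → ℝ) (D : V →L[ℝ] W)
    (P : V →L[ℝ] V) (c₁ c₂ ρ C_P : ℝ) : Prop where
  c₁_pos : 0 < c₁
  c₁_le_c₂ : c₁ ≤ c₂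
  symm : ∀ u v, A u v = A v u
  coercive : ∀ v, c₁ * ‖v‖ ^ 2 ≤ A v v
  bounded : ∀ v, A v v ≤ c₂ * ‖v‖ ^ 2
  skew : ∀ v, r v v = 0
  ρ_nonneg : 0 ≤ ρ
  abs_r_le : ∀ u v, |r u v| ≤ ρ * Real.sqrt (A u u) * Real.sqrt (A v v)
  proj_div : ∀ v, D (P v) = D v
  proj_orth : ∀ v, A (P v) (v - P v) = 0
  poincare : ∀ v, A (P v) (P v) ≤ C_P ^ 2 * ‖D v‖ ^ 2

noncomputable def energy (A : V →L[ℝ] V →L[ℝ] ℝ) (D : V →L[ℝ] W) (b : ℝ) (ψ w : V) : ℝ :=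
  1 / 2 * A w w + b * ‖D ψ‖ ^ 2

noncomputable def lyapunov (A : V →L[ℝ] V →L[ℝ] ℝ) (D : V →L[ℝ] W) (P : V →L[ℝ] V) (b η : ℝ)
    (ψ w : V) : ℝ :=
  energy A D b ψ w + η * A w (P ψ)

lemma hasDerivAt_lyapunov {A : V →L[ℝ] V →L[ℝ] ℝ} {D : V →L[ℝ] W} {P : V →L[ℝ] V} {b η : ℝ}
    (hA : ∀ u v, A u v = A v u) {ψ w : ℝ → V} {w' : V} {t : ℝ} (hψ : HasDerivAt ψ (w t) t)
    (hw : HasDerivAt w w' t) :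
    HasDerivAt (fun s => lyapunov A D P b η (ψ s) (w s))
      (A w' (w t) + 2 * b * ⟪D (ψ t), D (w t)⟫ + η * (A w' (P (ψ t)) + A (w t) (P (w t)))) t := by
  have hAw : HasDerivAt (fun s => A (w s) (w s)) (A w' (w t) + A (w t) w') t :=
    (A.hasFDerivAt.comp_hasDerivAt t hw).clm_apply hw
  have hDψ : HasDerivAt (fun s => ‖D (ψ s)‖ ^ 2) (2 * ⟪D (ψ t), D (w t)⟫) t :=
    (D.hasFDerivAt.comp_hasDerivAt t hψ).norm_sq
  have hQ : HasDerivAt (fun s => A (w s) (P (ψ s))) (A w' (P (ψ t)) + A (w t) (P (w t))) t :=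
    (A.hasFDerivAt.comp_hasDerivAt t hw).clm_apply (P.hasFDerivAt.comp_hasDerivAt t hψ)
  refine (((hAw.const_mul (1 / 2)).add (hDψ.const_mul b)).add (hQ.const_mul η)).congr_deriv ?_
  rw [hA (w t) w']
  ring

namespace IsDampedWaveSystem

variable {A : V →L[ℝ] V →L[ℝ] ℝ} {r : V → V → ℝ} {D : V →L[ℝ] W} {P : V →L[ℝ] V}
  {c₁ c₂ ρ C_P b η K : ℝ}

lemma apply_self_nonneg (hS : IsDampedWaveSystem A r D P c₁ c₂ ρ C_P) (v : V) : 0 ≤ A v v :=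
  (mul_nonneg hS.c₁_pos.le (sq_nonneg _)).trans (hS.coercive v)

lemma energy_nonneg (hS : IsDampedWaveSystem A r D P c₁ c₂ ρ C_P) (hb : 0 ≤ b) (ψ w : V) :
    0 ≤ energy A D b ψ w := by
  have hw := hS.apply_self_nonneg w
  unfold energy
  positivity

lemma abs_mul_apply_proj_le (hS : IsDampedWaveSystem A r D P c₁ c₂ ρ C_P) (hη : 0 ≤ η)
    (hη_half : 2 * η ≤ 1) (hη_b : η * C_P ^ 2 ≤ b) (ψ w : V) :
    |η * A w (P ψ)| ≤ energy A D b ψ w / 2 := by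
  have hcs := abs_apply_le_half_add hS.symm hS.apply_self_nonneg w (P ψ)
  have hw := mul_le_mul_of_nonneg_right hη_half (hS.apply_self_nonneg w)
  have hp := mul_le_mul_of_nonneg_left (hS.poincare ψ) hη
  have hD := mul_le_mul_of_nonneg_right hη_b (sq_nonneg ‖D ψ‖)
  rw [abs_mul, abs_of_nonneg hη, energy]
  nlinarith

lemma mul_abs_inner_proj_le (hS : IsDampedWaveSystem A r D P c₁ c₂ ρ C_P) (hK : 0 < K)
    (hη : 0 ≤ η) (hη_c₁ : 2 * η * C_P ^ 2 * K ≤ c₁ * b) (z ψ : V) :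
    η * |⟪z, P ψ⟫| ≤ K⁻¹ / 2 * ‖z‖ ^ 2 + η * b / 4 * ‖D ψ‖ ^ 2 := by
  have hp : η * K * ‖P ψ‖ ^ 2 ≤ b / 2 * ‖D ψ‖ ^ 2 := by
    have h := mul_le_mul_of_nonneg_left ((hS.coercive (P ψ)).trans (hS.poincare ψ))
      (by positivity : 0 ≤ 2 * η * K)
    refine le_of_mul_le_mul_left ?_ hS.c₁_pos
    nlinarith [mul_le_mul_of_nonneg_right hη_c₁ (sq_nonneg ‖D ψ‖)]
  have hy := mul_le_half_mul_sq_add_sq_div (x := ‖z‖) (y := η * ‖P ψ‖) (inv_pos.mpr hK)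
  have hcs := mul_le_mul_of_nonneg_left (abs_real_inner_le_norm z (P ψ)) hη
  rw [div_inv_eq_mul] at hy
  nlinarith

lemma neg_mul_r_proj_le (hS : IsDampedWaveSystem A r D P c₁ c₂ ρ C_P) (hK : 0 < K)
    (hη : 0 ≤ η) (hη_ρ : 16 * η * ρ ^ 2 * c₂ * C_P ^ 2 * K ≤ b) (ψ w : V) :
    -(η * r w (P ψ)) ≤ K⁻¹ / 16 * ‖w‖ ^ 2 + η * b / 4 * ‖D ψ‖ ^ 2 := by
  have hc₂ : 0 ≤ c₂ := hS.c₁_pos.le.trans hS.c₁_le_c₂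
  have hw : Real.sqrt (A w w) ≤ Real.sqrt c₂ * ‖w‖ := by
    rw [← Real.sqrt_sq (norm_nonneg w), ← Real.sqrt_mul hc₂]
    exact Real.sqrt_le_sqrt (hS.bounded w)
  have hp : Real.sqrt (A (P ψ) (P ψ)) ≤ |C_P| * ‖D ψ‖ := by
    rw [← Real.sqrt_sq_eq_abs, ← Real.sqrt_sq (norm_nonneg (D ψ)), ← Real.sqrt_mul (sq_nonneg _)]
    exact Real.sqrt_le_sqrt (hS.poincare ψ)
  have hr : |r w (P ψ)| ≤ ‖w‖ * (ρ * Real.sqrt c₂ * |C_P| * ‖D ψ‖) :=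
    (hS.abs_r_le w (P ψ)).trans (by
      have hwp := mul_le_mul hw hp (Real.sqrt_nonneg _) (by positivity)
      nlinarith [hS.ρ_nonneg])
  have hy := mul_le_half_mul_sq_add_sq_div (x := ‖w‖) (y := η * (ρ * Real.sqrt c₂ * |C_P| * ‖D ψ‖))
    (by positivity : 0 < K⁻¹ / 8)
  have hsq : (η * (ρ * Real.sqrt c₂ * |C_P| * ‖D ψ‖)) ^ 2 / (K⁻¹ / 8)
      = η / 2 * (16 * η * ρ ^ 2 * c₂ * C_P ^ 2 * K) * ‖D ψ‖ ^ 2 := by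
    rw [mul_pow, mul_pow, mul_pow, mul_pow, Real.sq_sqrt hc₂, sq_abs]
    field_simp
    ring
  have hb := mul_le_mul_of_nonneg_right (mul_le_mul_of_nonneg_left hη_ρ (by positivity : 0 ≤ η / 2))
    (sq_nonneg ‖D ψ‖)
  have hηr := mul_le_mul_of_nonneg_left hr hη
  nlinarith [neg_abs_le (r w (P ψ))]

lemma mul_apply_self_le (hS : IsDampedWaveSystem A r D P c₁ c₂ ρ C_P) (hK : 0 < K)
    (hη : 0 ≤ η) (hη_c₂ : 16 * η * c₂ * K ≤ 1) (w : V) :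
    η * A w w ≤ K⁻¹ / 16 * ‖w‖ ^ 2 := by
  have hηc₂ : η * c₂ ≤ K⁻¹ / 16 := calc
    η * c₂ = 16 * η * c₂ * K * K⁻¹ / 16 := by field_simp
    _ ≤ 1 * K⁻¹ / 16 := by gcongr
    _ = K⁻¹ / 16 := by rw [one_mul]
  nlinarith [mul_le_mul_of_nonneg_left (hS.bounded w) hη,
    mul_le_mul_of_nonneg_right hηc₂ (sq_nonneg ‖w‖)]

lemma mul_apply_proj_le (hS : IsDampedWaveSystem A r D P c₁ c₂ ρ C_P) (hK : 0 < K)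
    (hη : 0 ≤ η) (hη_c₂ : 16 * η * c₂ * K ≤ 1) (w : V) :
    η * A w (P w) ≤ K⁻¹ / 16 * ‖w‖ ^ 2 := by
  rw [apply_proj_self hS.symm hS.proj_orth]
  exact (mul_le_mul_of_nonneg_left
    (apply_proj_le hS.symm hS.apply_self_nonneg hS.proj_orth w) hη).trans
    (hS.mul_apply_self_le hK hη hη_c₂ w)

lemma lyapunov_deriv_le (hS : IsDampedWaveSystem A r D P c₁ c₂ ρ C_P) (hK : 0 < K) (hη : 0 ≤ η)
    (hη_c₂ : 16 * η * c₂ * K ≤ 1) (hη_ρ : 16 * η * ρ ^ 2 * c₂ * C_P ^ 2 * K ≤ b)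
    (hη_c₁ : 2 * η * C_P ^ 2 * K ≤ c₁ * b) (hη_half : 2 * η ≤ 1) (hη_b : η * C_P ^ 2 ≤ b)
    {R : ℝ} {ψ w w' f g : V}
    (heq : ∀ v, A w' v + r w v + 2 * b * ⟪D ψ, D v⟫ + ⟪g, v⟫ = ⟪f, v⟫)
    (hg : ‖w‖ ^ 2 + ‖g‖ ^ 2 ≤ K * ⟪g, w⟫ + R) :
    A w' w + 2 * b * ⟪D ψ, D w⟫ + η * (A w' (P ψ) + A w (P w))
      ≤ -(2 * η / 3) * lyapunov A D P b η ψ w + ((2 * K + K⁻¹ / 2) * ‖f‖ ^ 2 + K⁻¹ * R) := by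
  have hE' : A w' w + 2 * b * ⟪D ψ, D w⟫ = ⟪f, w⟫ - ⟪g, w⟫ := by
    have h := heq w
    rw [hS.skew] at h
    linarith
  have hQ' : A w' (P ψ) = ⟪f, P ψ⟫ - r w (P ψ) - 2 * b * ‖D ψ‖ ^ 2 - ⟪g, P ψ⟫ := by
    have h := heq (P ψ)
    rw [hS.proj_div, real_inner_self_eq_norm_sq] at h
    linarith
  have hdamp : K⁻¹ * ‖w‖ ^ 2 + K⁻¹ * ‖g‖ ^ 2 ≤ ⟪g, w⟫ + K⁻¹ * R := by
    have h := mul_le_mul_of_nonneg_left hg (inv_pos.mpr hK).le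
    rwa [mul_add, mul_add, inv_mul_cancel_left₀ hK.ne'] at h
  have hfw : ⟪f, w⟫ ≤ K⁻¹ / 8 * ‖w‖ ^ 2 + 2 * K * ‖f‖ ^ 2 := by
    have hy := mul_le_half_mul_sq_add_sq_div (x := ‖w‖) (y := ‖f‖) (by positivity : 0 < K⁻¹ / 4)
    have he : ‖f‖ ^ 2 / (K⁻¹ / 4) = 4 * K * ‖f‖ ^ 2 := by field_simp
    nlinarith [real_inner_le_norm f w]
  have hfp := mul_le_mul_of_nonneg_left (le_abs_self ⟪f, P ψ⟫) hη
  have hgp := mul_le_mul_of_nonneg_left (neg_abs_le ⟪g, P ψ⟫) hη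
  have hf := hS.mul_abs_inner_proj_le hK hη hη_c₁ f ψ
  have hg := hS.mul_abs_inner_proj_le hK hη hη_c₁ g ψ
  have hr := hS.neg_mul_r_proj_le hK hη hη_ρ ψ w
  have hPw := hS.mul_apply_proj_le hK hη hη_c₂ w
  have hL : 2 * η / 3 * lyapunov A D P b η ψ w ≤ K⁻¹ / 32 * ‖w‖ ^ 2 + η * b * ‖D ψ‖ ^ 2 := by
    have hc := (abs_le.mp (hS.abs_mul_apply_proj_le hη hη_half hη_b ψ w)).2
    have hw := hS.mul_apply_self_le hK hη hη_c₂ w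
    unfold lyapunov
    unfold energy at hc ⊢
    nlinarith
  have hb : 0 ≤ b := (mul_nonneg hη (sq_nonneg C_P)).trans hη_b
  have hw₀ : 0 ≤ K⁻¹ * ‖w‖ ^ 2 := by positivity
  have hg₀ : 0 ≤ K⁻¹ * ‖g‖ ^ 2 := by positivity
  have hD₀ : 0 ≤ η * b * ‖D ψ‖ ^ 2 := by positivity
  rw [hE', hQ']
  linarith

lemma energy_le (hS : IsDampedWaveSystem A r D P c₁ c₂ ρ C_P) (hK : 0 < K) (hη : 0 < η)
    (hη_c₂ : 16 * η * c₂ * K ≤ 1) (hη_ρ : 16 * η * ρ ^ 2 * c₂ * C_P ^ 2 * K ≤ b)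
    (hη_c₁ : 2 * η * C_P ^ 2 * K ≤ c₁ * b) (hη_half : 2 * η ≤ 1) (hη_b : η * C_P ^ 2 ≤ b)
    {R δ : ℝ} (hR : 0 ≤ R) {ψ w w' f g : ℝ → V}
    (hψ : ∀ t, HasDerivAt ψ (w t) t) (hw : ∀ t, HasDerivAt w (w' t) t)
    (heq : ∀ t, 0 ≤ t → ∀ v,
      A (w' t) v + r (w t) v + 2 * b * ⟪D (ψ t), D v⟫ + ⟪g t, v⟫ = ⟪f t, v⟫)
    (hg : ∀ t, 0 ≤ t → ‖w t‖ ^ 2 + ‖g t‖ ^ 2 ≤ K * ⟪g t, w t⟫ + R)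
    (hf : ∀ t, 0 ≤ t → ‖f t‖ ^ 2 ≤ δ) {t : ℝ} (ht : 0 ≤ t) :
    energy A D b (ψ t) (w t)
      ≤ 3 * energy A D b (ψ 0) (w 0) + 3 / η * ((2 * K + K⁻¹ / 2) * δ + K⁻¹ * R) := by
  set A₀ := (2 * K + K⁻¹ / 2) * δ + K⁻¹ * R with hA₀_def
  have hA₀ : 0 ≤ A₀ := by
    have hδ := (sq_nonneg _).trans (hf 0 le_rfl)
    positivity
  have hb : 0 ≤ b := (mul_nonneg hη.le (sq_nonneg C_P)).trans hη_b
  have hgron := le_max_of_hasDerivAt_le_neg_mul_add (A := A₀) (by positivity : 0 < 2 * η / 3)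
    (fun τ _ => hasDerivAt_lyapunov hS.symm (hψ τ) (hw τ))
    (fun τ hτ => (hS.lyapunov_deriv_le hK hη.le hη_c₂ hη_ρ hη_c₁ hη_half hη_b (heq τ hτ)
      (hg τ hτ)).trans (by rw [hA₀_def]; gcongr; exact hf τ hτ)) ht
  have hcomp (s : ℝ) := abs_le.mp (hS.abs_mul_apply_proj_le hη.le hη_half hη_b (ψ s) (w s))
  have hE₀ := hS.energy_nonneg hb (ψ 0) (w 0)
  have hmax : max (lyapunov A D P b η (ψ 0) (w 0)) (A₀ / (2 * η / 3))
      ≤ 3 / 2 * energy A D b (ψ 0) (w 0) + A₀ / (2 * η / 3) := by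
    have hL₀ := (hcomp 0).2
    have hA₀μ : 0 ≤ A₀ / (2 * η / 3) := by positivity
    exact max_le (by unfold lyapunov; linarith) (by linarith)
  have hA₀η : A₀ / (2 * η / 3) = 3 / η * A₀ / 2 := by field_simp
  have hL := (hcomp t).1
  unfold lyapunov at hgron hmax
  linarith

lemma energy_le_mul_rpow (hS : IsDampedWaveSystem A r D P c₁ c₂ ρ C_P)
    {α M B c₀ θ δ₂ : ℝ} (hα : α ∈ Ioo 0 1) (hM : 0 < M) (hB : 0 < B) (hc₀ : 0 ≤ c₀) (hθ : 0 < θ)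
    (hθ_c₂ : θ * (16 * c₂) ≤ 1) (hθ_ρ : θ * (16 * ρ ^ 2 * c₂ * C_P ^ 2) ≤ b)
    (hθ_c₁ : θ * (2 * C_P ^ 2) ≤ c₁ * b) (hθ_M : θ ≤ M) (hθ_Mb : θ * C_P ^ 2 ≤ 2 * M * b)
    {ψ w w' f g : ℝ → V} (hψ : ∀ t, HasDerivAt ψ (w t) t) (hw : ∀ t, HasDerivAt w (w' t) t)
    (heq : ∀ t, 0 ≤ t → ∀ v,
      A (w' t) v + r (w t) v + 2 * b * ⟪D (ψ t), D v⟫ + ⟪g t, v⟫ = ⟪f t, v⟫)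
    (hg : ∀ δ : ℝ, 0 < δ → ∀ t, 0 ≤ t → ‖w t‖ ^ 2 + ‖g t‖ ^ 2
      ≤ (2 * M + B * δ ^ (-(1 / α))) * ⟪g t, w t⟫ + c₀ * δ ^ (1 / (1 - α)))
    (hδ₂ : 0 < δ₂) (hδ₂_le : δ₂ ≤ 1) (hf : ∀ t, 0 ≤ t → ‖f t‖ ^ 2 ≤ δ₂) {t : ℝ} (ht : 0 ≤ t) :
    energy A D b (ψ t) (w t) ≤ 3 * energy A D b (ψ 0) (w 0)
      + 3 / θ * (16 * M ^ 2 + 1 / 2 + 4 * B ^ 2 + c₀) * δ₂ ^ (α / (2 - α)) := by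
  obtain ⟨hα₀, hα₁⟩ := hα
  have h2α : 2 - α ≠ 0 := by linarith
  have hb : 0 ≤ b := by nlinarith [hS.c₁_pos, sq_nonneg C_P]
  set δ := δ₂ ^ (α * (1 - α) / (2 - α)) with hδ_def
  have hδ : 0 < δ := Real.rpow_pos_of_pos hδ₂ _
  set s := δ ^ (-(1 / α)) with hs_def
  have hs : 0 < s := Real.rpow_pos_of_pos hδ _
  set K := 2 * M + B * s
  have hK_ge : 2 * M ≤ K := le_add_of_nonneg_right (mul_pos hB hs).le
  have hK : 0 < K := by linarith
  have hs_sq : s ^ 2 * δ₂ = δ₂ ^ (α / (2 - α)) := by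
    rw [hs_def, hδ_def, ← Real.rpow_natCast, ← Real.rpow_mul hδ₂.le, ← Real.rpow_mul hδ₂.le,
      ← Real.rpow_add_one hδ₂.ne']
    congr 1
    field_simp
    ring
  have hR : δ ^ (1 / (1 - α)) = δ₂ ^ (α / (2 - α)) := by
    rw [hδ_def, ← Real.rpow_mul hδ₂.le]
    congr 1
    field_simp
  have hδ₂_le_rpow : δ₂ ≤ δ₂ ^ (α / (2 - α)) := by
    simpa using Real.rpow_le_rpow_of_exponent_ge hδ₂ hδ₂_le
      (show α / (2 - α) ≤ 1 by rw [div_le_one (by linarith)]; linarith)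
  have hE := hS.energy_le hK (η := θ / K) (div_pos hθ hK) (by field_simp; linarith)
    (by field_simp; linarith) (by field_simp; linarith)
    (by rw [mul_div_assoc', div_le_one hK]; linarith)
    (by rw [div_mul_eq_mul_div, div_le_iff₀ hK]; nlinarith)
    (by positivity : 0 ≤ c₀ * δ ^ (1 / (1 - α))) hψ hw heq (hg δ hδ) hf ht
  have hK_sq : K ^ 2 ≤ 8 * M ^ 2 + 2 * B ^ 2 * s ^ 2 := by nlinarith [sq_nonneg (2 * M - B * s)]
  have hforce : (2 * K ^ 2 + 1 / 2) * δ₂ + c₀ * δ ^ (1 / (1 - α))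
      ≤ (16 * M ^ 2 + 1 / 2 + 4 * B ^ 2 + c₀) * δ₂ ^ (α / (2 - α)) := by
    rw [hR]
    nlinarith [mul_le_mul_of_nonneg_right hK_sq hδ₂.le]
  calc _ ≤ _ := hE
    _ = 3 * energy A D b (ψ 0) (w 0)
        + 3 / θ * ((2 * K ^ 2 + 1 / 2) * δ₂ + c₀ * δ ^ (1 / (1 - α))) := by
      field_simp
    _ ≤ _ := by
      rw [mul_assoc (3 / θ)]
      gcongr

lemma exists_energy_le (hS : IsDampedWaveSystem A r D P c₁ c₂ ρ C_P) (hb : 0 < b)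
    {α M B c₀ : ℝ} (hα : α ∈ Ioo 0 1) (hM : 0 < M) (hB : 0 < B) (hc₀ : 0 ≤ c₀) :
    ∃ C : ℝ, 0 < C ∧ ∀ ψ w w' f g : ℝ → V,
      (∀ t, HasDerivAt ψ (w t) t) → (∀ t, HasDerivAt w (w' t) t) →
      (∀ t, 0 ≤ t → ∀ v,
        A (w' t) v + r (w t) v + 2 * b * ⟪D (ψ t), D v⟫ + ⟪g t, v⟫ = ⟪f t, v⟫) →
      (∀ δ : ℝ, 0 < δ → ∀ t, 0 ≤ t → ‖w t‖ ^ 2 + ‖g t‖ ^ 2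
        ≤ (2 * M + B * δ ^ (-(1 / α))) * ⟪g t, w t⟫ + c₀ * δ ^ (1 / (1 - α))) →
      ∀ δ₂ : ℝ, 0 ≤ δ₂ → δ₂ ≤ 1 → (∀ t, 0 ≤ t → ‖f t‖ ^ 2 ≤ δ₂) →
      ∀ t, 0 ≤ t → energy A D b (ψ t) (w t)
        ≤ 3 * energy A D b (ψ 0) (w 0) + C * δ₂ ^ (α / (2 - α)) := by
  obtain ⟨θ, hθ_c₂, hθ_ρ, hθ_c₁, hθ_M, hθ_Mb, hθ⟩ :=
    ((eventually_mul_le (16 * c₂) one_pos).and <|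
      (eventually_mul_le (16 * ρ ^ 2 * c₂ * C_P ^ 2) hb).and <|
      (eventually_mul_le (2 * C_P ^ 2) (mul_pos hS.c₁_pos hb)).and <|
      (eventually_nhdsWithin_of_eventually_nhds (eventually_le_nhds hM)).and <|
      (eventually_mul_le (C_P ^ 2) (by positivity : 0 < 2 * M * b)).and
      eventually_mem_nhdsWithin).exists
  have hθ : (0 : ℝ) < θ := hθ
  have he : 0 < α / (2 - α) := div_pos hα.1 (by linarith [hα.2])
  refine ⟨3 / θ * (16 * M ^ 2 + 1 / 2 + 4 * B ^ 2 + c₀), by positivity,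
    fun ψ w w' f g hψ hw heq hg δ₂ hδ₂ hδ₂_le hf t ht => ?_⟩
  rcases hδ₂.eq_or_lt with rfl | hδ₂_pos
  · rw [Real.zero_rpow he.ne', mul_zero, add_zero]
    exact le_of_forall_le_add_mul_rpow he fun δ hδ hδ_le =>
      hS.energy_le_mul_rpow hα hM hB hc₀ hθ hθ_c₂ hθ_ρ hθ_c₁ hθ_M hθ_Mb hψ hw heq hg hδ hδ_le
        (fun τ hτ => (hf τ hτ).trans hδ.le) ht
  · exact hS.energy_le_mul_rpow hα hM hB hc₀ hθ hθ_c₂ hθ_ρ hθ_c₁ hθ_M hθ_Mb hψ hw heq hg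
      hδ₂_pos hδ₂_le hf ht

end IsDampedWaveSystem

end DampedWave

theorem continuous_dependence_general
    {V W : Type*} [NormedAddCommGroup V] [InnerProductSpace ℝ V]
    [NormedAddCommGroup W] [InnerProductSpace ℝ W]
    (a : V → V → ℝ) (c₁ c₂ : ℝ) (hc₁ : 0 < c₁) (hc₁₂ : c₁ ≤ c₂)
    (ha_bilin : ∀ (s : ℝ) (u v w : V), a (u + s • v) w = a u w + s * a v w)
    (ha_symm : ∀ u v : V, a u v = a v u)
    (ha_lower : ∀ v : V, c₁ * ‖v‖ ^ 2 ≤ a v v)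
    (ha_upper : ∀ v : V, a v v ≤ c₂ * ‖v‖ ^ 2)
    (D : V →L[ℝ] W)
    (r : V → V → ℝ)
    (hr_bilin : ∀ (s : ℝ) (u v w : V), r (u + s • v) w = r u w + s * r v w)
    (hr_zero : ∀ v : V, r v v = 0)
    (ρ : ℝ) (hρ : 0 ≤ ρ)
    (hr_bound : ∀ u v : V, |r u v| ≤ ρ * Real.sqrt (a u u) * Real.sqrt (a v v))
    (P : V →L[ℝ] V) (C_P : ℝ)
    (hP_div : ∀ v : V, D (P v) = D v)
    (hP_orth : ∀ v : V, a (P v) (v - P v) = 0)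
    (hP_poincare : ∀ v : V, a (P v) (P v) ≤ C_P ^ 2 * ‖D v‖ ^ 2)
    (α M C₀ c₀ : ℝ) (hα : α ∈ Set.Ioo (0 : ℝ) 1) (hM : 0 < M) (hC₀ : 0 < C₀)
    (hc₀ : 0 ≤ c₀)
    (G : V → V)
    (hG_diff : ∀ δ : ℝ, 0 < δ → ∀ v w : V,
      ‖v - w‖ ^ 2 + ‖G v - G w‖ ^ 2
        ≤ (2 * M + (2 * C₀) ^ (1 / α) * δ ^ (-(1 / α))) * ⟪G v - G w, v - w⟫
          + c₀ * δ ^ (1 / (1 - α)))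
    (β ε : ℝ) (hβ : 0 < β) (hε : 0 < ε) :
    ∃ C δstar : ℝ, 0 < C ∧ 0 < δstar ∧
      ∀ (φ₁ φ₂ : ℝ → V) (F₁ F₂ : ℝ → V),
        ContDiff ℝ 2 φ₁ → ContDiff ℝ 2 φ₂ → Continuous F₁ → Continuous F₂ →
        (∀ t : ℝ, 0 ≤ t → ∀ v : V,
          a (deriv (deriv φ₁) t) v + r (deriv φ₁ t) v
            + (β / ε ^ 2) * ⟪D (φ₁ t), D v⟫ + ⟪G (deriv φ₁ t), v⟫ = ⟪F₁ t, v⟫) →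
        (∀ t : ℝ, 0 ≤ t → ∀ v : V,
          a (deriv (deriv φ₂) t) v + r (deriv φ₂ t) v
            + (β / ε ^ 2) * ⟪D (φ₂ t), D v⟫ + ⟪G (deriv φ₂ t), v⟫ = ⟪F₂ t, v⟫) →
        ∀ E : ℝ → ℝ,
        (∀ t : ℝ, E t = (1 / 2) * a (deriv (fun s => φ₁ s - φ₂ s) t)
                                    (deriv (fun s => φ₁ s - φ₂ s) t)
              + (β / (2 * ε ^ 2)) * ‖D (φ₁ t - φ₂ t)‖ ^ 2) →
        ∀ δ₁ δ₂ : ℝ, 0 ≤ δ₁ → 0 ≤ δ₂ → δ₂ ≤ δstar →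
          E 0 ≤ δ₁ → (∀ t : ℝ, 0 ≤ t → ‖F₁ t - F₂ t‖ ^ 2 ≤ δ₂) →
          ∀ t : ℝ, 0 ≤ t → E t ≤ 3 * δ₁ + C * δ₂ ^ (α / (2 - α)) := by
  obtain ⟨A, rfl⟩ := exists_continuousBilinear_eq (hc₁.le.trans hc₁₂) ha_bilin ha_symm
    (fun v => (by positivity : 0 ≤ c₁ * ‖v‖ ^ 2).trans (ha_lower v)) ha_upper
  have hS : IsDampedWaveSystem A r D P c₁ c₂ ρ C_P :=
    ⟨hc₁, hc₁₂, ha_symm, ha_lower, ha_upper, hr_zero, hρ, hr_bound, hP_div, hP_orth, hP_poincare⟩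
  have hr_sub (u v w : V) : r (u - v) w = r u w - r v w :=
    (isLinearMap_of_add_smul (f := (r · w)) (hr_bilin · · · w)).map_sub u v
  obtain ⟨C, hC, hbound⟩ := hS.exists_energy_le (b := β / (2 * ε ^ 2)) (by positivity) hα hM
    (B := (2 * C₀) ^ (1 / α)) (by positivity) hc₀
  refine ⟨C, 1, hC, one_pos, fun φ₁ φ₂ F₁ F₂ hφ₁ hφ₂ _ _ heq₁ heq₂ E hE δ₁ δ₂ _ hδ₂ hδ₂_le hE₀ hF
    t ht => ?_⟩
  have hψ (s : ℝ) : HasDerivAt (fun s => φ₁ s - φ₂ s) (deriv φ₁ s - deriv φ₂ s) s :=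
    (hφ₁.differentiable (by norm_num) s).hasDerivAt.sub
      (hφ₂.differentiable (by norm_num) s).hasDerivAt
  have hw (s : ℝ) : HasDerivAt (fun s => deriv φ₁ s - deriv φ₂ s)
      (deriv (deriv φ₁) s - deriv (deriv φ₂) s) s :=
    (hφ₁.differentiable_deriv_two s).hasDerivAt.sub (hφ₂.differentiable_deriv_two s).hasDerivAt
  have hE' (s : ℝ) :
      E s = energy A D (β / (2 * ε ^ 2)) (φ₁ s - φ₂ s) (deriv φ₁ s - deriv φ₂ s) := by
    rw [hE s, (hψ s).deriv]
    rfl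
  refine (hE' t).trans_le <| (hbound (fun s => φ₁ s - φ₂ s) (fun s => deriv φ₁ s - deriv φ₂ s)
    (fun s => deriv (deriv φ₁) s - deriv (deriv φ₂) s) (fun s => F₁ s - F₂ s)
    (fun s => G (deriv φ₁ s) - G (deriv φ₂ s)) hψ hw (fun τ hτ v => ?_)
    (fun δ hδ τ _ => hG_diff δ hδ _ _) δ₂ hδ₂ hδ₂_le hF t ht).trans ?_
  · rw [show 2 * (β / (2 * ε ^ 2)) = β / ε ^ 2 by field_simp]
    simp only [map_sub, sub_apply, hr_sub, inner_sub_left]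
    linarith [heq₁ τ hτ v, heq₂ τ hτ v]
  · rw [← hE' 0]
    gcongr

/-- Continuous dependence on initial data and forcing (paper's Theorem 3.5, abstract form). -/
theorem continuous_dependence
    {V W : Type*} [NormedAddCommGroup V] [InnerProductSpace ℝ V]
    [NormedAddCommGroup W] [InnerProductSpace ℝ W]
    (a : V → V → ℝ) (c₁ c₂ : ℝ) (hc₁ : 0 < c₁) (hc₁₂ : c₁ ≤ c₂)
    (ha_bilin : ∀ (s : ℝ) (u v w : V), a (u + s • v) w = a u w + s * a v w)
    (ha_symm : ∀ u v : V, a u v = a v u)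
    (ha_lower : ∀ v : V, c₁ * ‖v‖ ^ 2 ≤ a v v)
    (ha_upper : ∀ v : V, a v v ≤ c₂ * ‖v‖ ^ 2)
    (D : V →L[ℝ] W)
    (r : V → V → ℝ)
    (hr_bilin : ∀ (s : ℝ) (u v w : V), r (u + s • v) w = r u w + s * r v w)
    (hr_bilin' : ∀ (s : ℝ) (u v w : V), r u (v + s • w) = r u v + s * r u w)
    (hr_zero : ∀ v : V, r v v = 0)
    (ρ : ℝ) (hρ : 0 ≤ ρ)
    (hr_bound : ∀ u v : V, |r u v| ≤ ρ * Real.sqrt (a u u) * Real.sqrt (a v v))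
    (P : V →L[ℝ] V) (C_P : ℝ) (hC_P : 0 < C_P)
    (hP_div : ∀ v : V, D (P v) = D v)
    (hP_orth : ∀ v : V, a (P v) (v - P v) = 0)
    (hP_poincare : ∀ v : V, a (P v) (P v) ≤ C_P ^ 2 * ‖D v‖ ^ 2)
    (α M C₀ c₀ : ℝ) (hα : α ∈ Set.Ioo (0 : ℝ) 1) (hM : 0 < M) (hC₀ : 0 < C₀)
    (hc₀ : 0 ≤ c₀)
    (G : V → V)
    (hG_monot : ∀ v w : V, 0 ≤ ⟪G v - G w, v - w⟫)
    (hG_diff : ∀ δ : ℝ, 0 < δ → ∀ v w : V,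
      ‖v - w‖ ^ 2 + ‖G v - G w‖ ^ 2
        ≤ (2 * M + (2 * C₀) ^ (1 / α) * δ ^ (-(1 / α))) * ⟪G v - G w, v - w⟫
          + c₀ * δ ^ (1 / (1 - α)))
    (β ε : ℝ) (hβ : 0 < β) (hε : 0 < ε) :
    ∃ C δstar : ℝ, 0 < C ∧ 0 < δstar ∧
      ∀ (φ₁ φ₂ : ℝ → V) (F₁ F₂ : ℝ → V),
        ContDiff ℝ 2 φ₁ → ContDiff ℝ 2 φ₂ → Continuous F₁ → Continuous F₂ →
        (∀ t : ℝ, 0 ≤ t → ∀ v : V,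
          a (deriv (deriv φ₁) t) v + r (deriv φ₁ t) v
            + (β / ε ^ 2) * ⟪D (φ₁ t), D v⟫ + ⟪G (deriv φ₁ t), v⟫ = ⟪F₁ t, v⟫) →
        (∀ t : ℝ, 0 ≤ t → ∀ v : V,
          a (deriv (deriv φ₂) t) v + r (deriv φ₂ t) v
            + (β / ε ^ 2) * ⟪D (φ₂ t), D v⟫ + ⟪G (deriv φ₂ t), v⟫ = ⟪F₂ t, v⟫) →
        ∀ E : ℝ → ℝ,
        (∀ t : ℝ, E t = (1 / 2) * a (deriv (fun s => φ₁ s - φ₂ s) t)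
                                    (deriv (fun s => φ₁ s - φ₂ s) t)
              + (β / (2 * ε ^ 2)) * ‖D (φ₁ t - φ₂ t)‖ ^ 2) →
        ∀ δ₁ δ₂ : ℝ, 0 ≤ δ₁ → 0 ≤ δ₂ → δ₂ ≤ δstar →
          E 0 ≤ δ₁ → (∀ t : ℝ, 0 ≤ t → ‖F₁ t - F₂ t‖ ^ 2 ≤ δ₂) →
          ∀ t : ℝ, 0 ≤ t → E t ≤ 3 * δ₁ + C * δ₂ ^ (α / (2 - α)) :=
  continuous_dependence_general a c₁ c₂ hc₁ hc₁₂ ha_bilin ha_symm ha_lower ha_upper D r hr_bilin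
    hr_zero ρ hρ hr_bound P C_P hP_div hP_orth hP_poincare α M C₀ c₀ hα hM hC₀ hc₀ G hG_diff β ε hβ
    hε
end

section
/- Existence of the concave auxiliary function (the paper's Lemma 3.2): Let n, d be positive integers, K ⊆ ℝⁿ a nonempty compact set, and g : K × ℝ^d → ℝ^d a continuous function such that: (i) for every x ∈ K and all v ≠ w in ℝ^d, (g(x,v) − g(x,w))·(v − w) > 0; and (ii) there exists M > 0 such that for every x ∈ K and all v, w ∈ ℝ^d with |v| ≥ 1 and |w| ≥ 1, both |v − w|² ≤ M (g(x,v) − g(x,w))·(v − w) and |g(x,v) − g(x,w)|² ≤ M (g(x,v) − g(x,w))·(v − w). Then there exists a nondecreasing, concave function J : [0,∞) → [0,∞) with J(0) = 0 such that |v − w|² + |g(x,v) − g(x,w)|² ≤ J((v − w)·(g(x,v) − g(x,w))) for every x ∈ K and all v, w ∈ ℝ^d with |v| ≤ 1 and |w| ≤ 1. -/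
open scoped RealInnerProductSpace

/-- General construction: on a compact set `D`, if `F` is nonnegative and
continuous, `ip` is nonnegative and continuous, and `ip` is positive wherever
`F` is, then there is a nondecreasing concave `J` with `J 0 = 0` majorizing
`F` via `ip`. -/
private lemma exists_concave_majorant {α : Type*} [TopologicalSpace α]
    {D : Set α} (hD : IsCompact D) (hDne : D.Nonempty)
    {F ip : α → ℝ} (hF_cont : ContinuousOn F D) (hip_cont : ContinuousOn ip D)
    (hF_nonneg : ∀ p ∈ D, 0 ≤ F p)
    (hip_nonneg : ∀ p ∈ D, 0 ≤ ip p)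
    (hpos : ∀ p ∈ D, 0 < F p → 0 < ip p) :
    ∃ J : ℝ → ℝ,
      MonotoneOn J (Set.Ici (0 : ℝ)) ∧
      ConcaveOn ℝ (Set.Ici (0 : ℝ)) J ∧
      (∀ s : ℝ, 0 ≤ s → 0 ≤ J s) ∧
      J 0 = 0 ∧
      ∀ p ∈ D, F p ≤ J (ip p) := by
  classical
  obtain ⟨p₀, hp₀D, hp₀⟩ := hD.exists_isMaxOn hDne hF_cont
  set B : ℝ := F p₀ with hB
  have hB0 : 0 ≤ B := hF_nonneg p₀ hp₀D
  -- key compactness step: affine majorants with arbitrarily small intercept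
  have key : ∀ ε : ℝ, 0 < ε → ∃ a : ℝ, 0 ≤ a ∧ ∀ p ∈ D, F p ≤ a * ip p + ε := by
    intro ε hε
    have hcs : CompactSpace ↥D := isCompact_iff_compactSpace.mp hD
    set C : Set α := Subtype.val '' {q : ↥D | ε ≤ F ↑q} with hC
    have hCsub : C ⊆ D := by rintro _ ⟨q, _, rfl⟩; exact q.2
    have hCcl : IsClosed {q : ↥D | ε ≤ F ↑q} :=
      isClosed_le continuous_const hF_cont.restrict
    have hCcomp : IsCompact C := hCcl.isCompact.image continuous_subtype_val
    rcases C.eq_empty_or_nonempty with hCe | hCne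
    · refine ⟨0, le_refl 0, fun p hp => ?_⟩
      have hnot : ¬ ε ≤ F p := fun h =>
        (Set.eq_empty_iff_forall_notMem.mp hCe p) ⟨⟨p, hp⟩, h, rfl⟩
      push_neg at hnot
      linarith
    · obtain ⟨q₀, hq₀C, hq₀⟩ := hCcomp.exists_isMinOn hCne (hip_cont.mono hCsub)
      have hq₀D : q₀ ∈ D := hCsub hq₀C
      have hεq₀ : ε ≤ F q₀ := by
        rcases hq₀C with ⟨q, hq, rfl⟩; exact hq
      have hδ : 0 < ip q₀ := hpos q₀ hq₀D (lt_of_lt_of_le hε hεq₀)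
      refine ⟨B / ip q₀, div_nonneg hB0 hδ.le, fun p hp => ?_⟩
      by_cases h : ε ≤ F p
      · have hpC : p ∈ C := ⟨⟨p, hp⟩, h, rfl⟩
        have h1 : ip q₀ ≤ ip p := hq₀ hpC
        have h2 : F p ≤ B := hp₀ hp
        have h3 : B ≤ B / ip q₀ * ip p := by
          rw [div_mul_eq_mul_div, le_div_iff₀ hδ]
          nlinarith
        linarith
      · push_neg at h
        have := mul_nonneg (div_nonneg hB0 hδ.le) (hip_nonneg p hp)
        linarith
  -- the set of admissible affine majorants
  set S : Set (ℝ × ℝ) :=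
    {ab | 0 ≤ ab.1 ∧ 0 ≤ ab.2 ∧ ∀ p ∈ D, F p ≤ ab.1 * ip p + ab.2} with hS
  have hSne : S.Nonempty :=
    ⟨(0, B), le_refl 0, hB0, fun p hp => by simpa using hp₀ hp⟩
  set J : ℝ → ℝ := fun s => sInf ((fun ab : ℝ × ℝ => ab.1 * s + ab.2) '' S) with hJ
  have hIne : ∀ s : ℝ, ((fun ab : ℝ × ℝ => ab.1 * s + ab.2) '' S).Nonempty :=
    fun s => hSne.image _
  have hbdd : ∀ s : ℝ, 0 ≤ s →
      BddBelow ((fun ab : ℝ × ℝ => ab.1 * s + ab.2) '' S) := by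
    intro s hs
    refine ⟨0, ?_⟩
    rintro y ⟨ab, hab, rfl⟩
    exact add_nonneg (mul_nonneg hab.1 hs) hab.2.1
  have hJle : ∀ s : ℝ, 0 ≤ s → ∀ ab ∈ S, J s ≤ ab.1 * s + ab.2 := by
    intro s hs ab hab
    exact csInf_le (hbdd s hs) ⟨ab, hab, rfl⟩
  have hleJ : ∀ (s c : ℝ), (∀ ab ∈ S, c ≤ ab.1 * s + ab.2) → c ≤ J s := by
    intro s c h
    exact le_csInf (hIne s) (by rintro y ⟨ab, hab, rfl⟩; exact h ab hab)
  have hJnonneg : ∀ s, 0 ≤ s → 0 ≤ J s := fun s hs =>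
    hleJ s 0 fun ab hab => add_nonneg (mul_nonneg hab.1 hs) hab.2.1
  have hJmono : MonotoneOn J (Set.Ici 0) := by
    intro s hs t ht hst
    refine hleJ t (J s) fun ab hab => ?_
    calc J s ≤ ab.1 * s + ab.2 := hJle s hs ab hab
      _ ≤ ab.1 * t + ab.2 := by nlinarith [hab.1]
  have hJ0 : J 0 = 0 := by
    refine le_antisymm ?_ (hJnonneg 0 le_rfl)
    have h : ∀ ε : ℝ, 0 < ε → J 0 ≤ 0 + ε := by
      intro ε hε
      obtain ⟨a, ha0, ha⟩ := key ε hε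
      have hmem : (a, ε) ∈ S := ⟨ha0, hε.le, ha⟩
      simpa using hJle 0 le_rfl (a, ε) hmem
    exact le_of_forall_pos_le_add fun ε hε => h ε hε
  have hJconc : ConcaveOn ℝ (Set.Ici 0) J := by
    refine ⟨convex_Ici 0, ?_⟩
    intro s hs t ht a b ha hb hab
    have hs0 : (0:ℝ) ≤ s := hs
    have ht0 : (0:ℝ) ≤ t := ht
    refine hleJ _ _ fun ab habS => ?_
    have h1 := hJle s hs0 ab habS
    have h2 := hJle t ht0 ab habS
    have heq : ab.1 * (a • s + b • t) + ab.2
        = a * (ab.1 * s + ab.2) + b * (ab.1 * t + ab.2) := by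
      simp only [smul_eq_mul]
      rw [show b = 1 - a by linarith]
      ring
    rw [heq]
    simp only [smul_eq_mul]
    have := mul_le_mul_of_nonneg_left h1 ha
    have := mul_le_mul_of_nonneg_left h2 hb
    linarith
  exact ⟨J, hJmono, hJconc, hJnonneg, hJ0,
    fun p hp => hleJ (ip p) (F p) fun ab hab => hab.2.2 p hp⟩

/-- Existence of the concave auxiliary function (paper's Lemma 3.2). -/
theorem exists_concave_auxiliary_function
    (n d : ℕ) (hn : 0 < n) (hd : 0 < d)
    (K : Set (EuclideanSpace ℝ (Fin n))) (hK_ne : K.Nonempty) (hK : IsCompact K)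
    (g : EuclideanSpace ℝ (Fin n) → EuclideanSpace ℝ (Fin d) → EuclideanSpace ℝ (Fin d))
    (hg_cont : ContinuousOn (fun p => g p.1 p.2) (K ×ˢ (Set.univ : Set (EuclideanSpace ℝ (Fin d)))))
    (hg_monot : ∀ x ∈ K, ∀ v w : EuclideanSpace ℝ (Fin d), v ≠ w →
      0 < ⟪g x v - g x w, v - w⟫)
    (M : ℝ) (hM : 0 < M)
    (hg_linear : ∀ x ∈ K, ∀ v w : EuclideanSpace ℝ (Fin d), 1 ≤ ‖v‖ → 1 ≤ ‖w‖ →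
      ‖v - w‖ ^ 2 ≤ M * ⟪g x v - g x w, v - w⟫ ∧
      ‖g x v - g x w‖ ^ 2 ≤ M * ⟪g x v - g x w, v - w⟫) :
    ∃ J : ℝ → ℝ,
      MonotoneOn J (Set.Ici (0 : ℝ)) ∧
      ConcaveOn ℝ (Set.Ici (0 : ℝ)) J ∧
      (∀ s : ℝ, 0 ≤ s → 0 ≤ J s) ∧
      J 0 = 0 ∧
      ∀ x ∈ K, ∀ v w : EuclideanSpace ℝ (Fin d), ‖v‖ ≤ 1 → ‖w‖ ≤ 1 →
        ‖v - w‖ ^ 2 + ‖g x v - g x w‖ ^ 2 ≤ J ⟪v - w, g x v - g x w⟫ := by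
  classical
  obtain ⟨x₀, hx₀⟩ := hK_ne
  set D : Set (EuclideanSpace ℝ (Fin n) × EuclideanSpace ℝ (Fin d) × EuclideanSpace ℝ (Fin d)) :=
    K ×ˢ (Metric.closedBall 0 1 ×ˢ Metric.closedBall 0 1) with hDdef
  have hD : IsCompact D :=
    hK.prod ((isCompact_closedBall _ _).prod (isCompact_closedBall _ _))
  have hDne : D.Nonempty :=
    ⟨(x₀, 0, 0), hx₀, by simp, by simp⟩
  have hg1 : ContinuousOn
      (fun p : EuclideanSpace ℝ (Fin n) × EuclideanSpace ℝ (Fin d) × EuclideanSpace ℝ (Fin d) =>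
        g p.1 p.2.1) D := by
    have hmap : Set.MapsTo
        (fun p : EuclideanSpace ℝ (Fin n) × EuclideanSpace ℝ (Fin d) × EuclideanSpace ℝ (Fin d) =>
          (p.1, p.2.1)) D (K ×ˢ (Set.univ : Set (EuclideanSpace ℝ (Fin d)))) :=
      fun p hp => ⟨hp.1, trivial⟩
    exact hg_cont.comp (Continuous.continuousOn (by fun_prop)) hmap
  have hg2 : ContinuousOn
      (fun p : EuclideanSpace ℝ (Fin n) × EuclideanSpace ℝ (Fin d) × EuclideanSpace ℝ (Fin d) =>
        g p.1 p.2.2) D := by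
    have hmap : Set.MapsTo
        (fun p : EuclideanSpace ℝ (Fin n) × EuclideanSpace ℝ (Fin d) × EuclideanSpace ℝ (Fin d) =>
          (p.1, p.2.2)) D (K ×ˢ (Set.univ : Set (EuclideanSpace ℝ (Fin d)))) :=
      fun p hp => ⟨hp.1, trivial⟩
    exact hg_cont.comp (Continuous.continuousOn (by fun_prop)) hmap
  have hF_cont : ContinuousOn
      (fun p : EuclideanSpace ℝ (Fin n) × EuclideanSpace ℝ (Fin d) × EuclideanSpace ℝ (Fin d) =>
        ‖p.2.1 - p.2.2‖ ^ 2 + ‖g p.1 p.2.1 - g p.1 p.2.2‖ ^ 2) D := by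
    apply ContinuousOn.add
    · fun_prop
    · exact ((hg1.sub hg2).norm.pow 2)
  have hip_cont : ContinuousOn
      (fun p : EuclideanSpace ℝ (Fin n) × EuclideanSpace ℝ (Fin d) × EuclideanSpace ℝ (Fin d) =>
        (⟪p.2.1 - p.2.2, g p.1 p.2.1 - g p.1 p.2.2⟫ : ℝ)) D := by
    exact ContinuousOn.inner (by fun_prop) (hg1.sub hg2)
  have hF_nonneg : ∀ p ∈ D,
      (0:ℝ) ≤ ‖p.2.1 - p.2.2‖ ^ 2 + ‖g p.1 p.2.1 - g p.1 p.2.2‖ ^ 2 := by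
    intro p _; positivity
  have hip_nonneg : ∀ p ∈ D,
      (0:ℝ) ≤ ⟪p.2.1 - p.2.2, g p.1 p.2.1 - g p.1 p.2.2⟫ := by
    intro p hp
    rcases eq_or_ne p.2.1 p.2.2 with h | h
    · simp [h]
    · have := hg_monot p.1 hp.1 p.2.1 p.2.2 h
      rw [real_inner_comm]
      exact this.le
  have hpos : ∀ p ∈ D,
      (0:ℝ) < ‖p.2.1 - p.2.2‖ ^ 2 + ‖g p.1 p.2.1 - g p.1 p.2.2‖ ^ 2 →
      (0:ℝ) < ⟪p.2.1 - p.2.2, g p.1 p.2.1 - g p.1 p.2.2⟫ := by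
    intro p hp hF
    rcases eq_or_ne p.2.1 p.2.2 with h | h
    · exfalso; rw [h] at hF; simp at hF
    · have := hg_monot p.1 hp.1 p.2.1 p.2.2 h
      rw [real_inner_comm]
      exact this
  obtain ⟨J, h1, h2, h3, h4, h5⟩ :=
    exists_concave_majorant hD hDne hF_cont hip_cont hF_nonneg hip_nonneg hpos
  refine ⟨J, h1, h2, h3, h4, fun x hx v w hv hw => ?_⟩
  exact h5 (x, v, w) ⟨hx, by simpa using hv, by simpa using hw⟩
end

section
/- Mixed-region estimate (the paper's Lemma 3.3): Let d be a positive integer and g : ℝ^d → ℝ^d be strictly monotone on differences and have linear growth on differences with constant M > 0. Let J : [0,∞) → [0,∞) be nondecreasing and satisfy |v − w|² + |g(v) − g(w)|² ≤ J((v − w)·(g(v) − g(w))) for all v, w ∈ ℝ^d with |v| ≤ 1 and |w| ≤ 1. Then for all v, w ∈ ℝ^d with |v| ≥ 1 and |w| < 1, each of the quantities |v − w|² and |g(v) − g(w)|² is at most 2M (g(v) − g(w))·(v − w) + 2 J((g(v) − g(w))·(v − w)). -/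
open scoped RealInnerProductSpace

set_option maxHeartbeats 1000000 in
/-- Mixed-region estimate (paper's Lemma 3.3). -/
theorem mixed_region_estimate
    (d : ℕ) (hd : 0 < d)
    (g : EuclideanSpace ℝ (Fin d) → EuclideanSpace ℝ (Fin d))
    (hg_monot : ∀ v w : EuclideanSpace ℝ (Fin d), v ≠ w → 0 < ⟪g v - g w, v - w⟫)
    (M : ℝ) (hM : 0 < M)
    (hg_linear : ∀ v w : EuclideanSpace ℝ (Fin d), 1 ≤ ‖v‖ → 1 ≤ ‖w‖ →
      ‖v - w‖ ^ 2 ≤ M * ⟪g v - g w, v - w⟫ ∧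
      ‖g v - g w‖ ^ 2 ≤ M * ⟪g v - g w, v - w⟫)
    (J : ℝ → ℝ)
    (hJ_mono : MonotoneOn J (Set.Ici (0 : ℝ)))
    (hJ_nonneg : ∀ s : ℝ, 0 ≤ s → 0 ≤ J s)
    (hJ : ∀ v w : EuclideanSpace ℝ (Fin d), ‖v‖ ≤ 1 → ‖w‖ ≤ 1 →
      ‖v - w‖ ^ 2 + ‖g v - g w‖ ^ 2 ≤ J ⟪v - w, g v - g w⟫) :
    ∀ v w : EuclideanSpace ℝ (Fin d), 1 ≤ ‖v‖ → ‖w‖ < 1 →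
      ‖v - w‖ ^ 2 ≤ 2 * M * ⟪g v - g w, v - w⟫ + 2 * J ⟪g v - g w, v - w⟫ ∧
      ‖g v - g w‖ ^ 2 ≤ 2 * M * ⟪g v - g w, v - w⟫ + 2 * J ⟪g v - g w, v - w⟫ := by
  intro v w hv hw
  have hvw : v ≠ w := by
    intro h; rw [h] at hv; linarith
  have hcont : ContinuousOn (fun t : ℝ => ‖w + t • (v - w)‖) (Set.Icc 0 1) := by
    fun_prop
  obtain ⟨t, ht01, htz⟩ : ∃ t ∈ Set.Icc (0:ℝ) 1, ‖w + t • (v - w)‖ = 1 := by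
    have h0 : ‖w + (0:ℝ) • (v - w)‖ = ‖w‖ := by simp
    have h1 : ‖w + (1:ℝ) • (v - w)‖ = ‖v‖ := by
      congr 1; module
    have hsub := intermediate_value_Icc (zero_le_one) hcont
    have hmem : (1:ℝ) ∈ Set.Icc ‖w + (0:ℝ)•(v-w)‖ ‖w + (1:ℝ)•(v-w)‖ := by
      rw [h0, h1]; exact ⟨le_of_lt hw, hv⟩
    obtain ⟨t, ht, h⟩ := hsub hmem
    exact ⟨t, ht, h⟩
  set z : EuclideanSpace ℝ (Fin d) := w + t • (v - w) with hz
  have hzn : ‖z‖ = 1 := htz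
  have ht0 : 0 < t := by
    rcases lt_or_eq_of_le ht01.1 with h | h
    · exact h
    · exfalso
      have hzw' : z = w := by rw [hz, ← h]; simp
      rw [hzw'] at hzn; linarith
  have hzw_ne : z ≠ w := by
    intro h
    have h2 : t • (v - w) = 0 := by
      have h3 : w + t • (v - w) - w = 0 := by rw [← hz, h]; simp
      simpa using h3
    rcases smul_eq_zero.mp h2 with h3 | h3
    · exact ht0.ne' h3
    · exact hvw (sub_eq_zero.mp h3)
  have hvz_eq : v - z = (1 - t) • (v - w) := by rw [hz]; module
  have hzw_eq : z - w = t • (v - w) := by rw [hz]; module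
  set a : ℝ := ⟪g v - g z, v - z⟫ with ha
  set b : ℝ := ⟪g z - g w, z - w⟫ with hb
  set S : ℝ := ⟪g v - g w, v - w⟫ with hS
  set c1 : ℝ := ⟪g v - g z, v - w⟫ with hc1
  set c2 : ℝ := ⟪g z - g w, v - w⟫ with hc2
  have haeq : a = (1 - t) * c1 := by
    rw [ha, hvz_eq, real_inner_smul_right, hc1]
  have hbeq : b = t * c2 := by
    rw [hb, hzw_eq, real_inner_smul_right, hc2]
  have hSeq : S = c1 + c2 := by
    have hgd : g v - g w = (g v - g z) + (g z - g w) := by abel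
    rw [hS, hgd, inner_add_left, hc1, hc2]
  have ha_nonneg : 0 ≤ a := by
    rcases eq_or_ne v z with h | h
    · rw [ha, h]; simp
    · exact (hg_monot v z h).le
  have hb_pos : 0 < b := hg_monot z w hzw_ne
  have hc2_pos : 0 < c2 := by
    have h4 : 0 < t * c2 := hbeq ▸ hb_pos
    nlinarith
  have hc1_nonneg : 0 ≤ c1 := by
    rcases lt_or_eq_of_le ht01.2 with h | h
    · nlinarith [haeq, ha_nonneg]
    · have hzv : z = v := by rw [hz, h]; module
      have : c1 = 0 := by rw [hc1, hzv]; simp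
      linarith
  have ha_le : a ≤ S := by
    have h6 : 0 ≤ t * c1 := mul_nonneg ht0.le hc1_nonneg
    linarith [haeq, hSeq, hc2_pos]
  have hb_le : b ≤ S := by
    have h6 : 0 ≤ (1 - t) * c2 := mul_nonneg (by linarith [ht01.2]) hc2_pos.le
    linarith [hbeq, hSeq, hc1_nonneg]
  have hS_pos : 0 < S := lt_of_lt_of_le hb_pos hb_le
  -- J estimate on the inside pair (z, w)
  have hJzw := hJ z w (le_of_eq hzn) (le_of_lt hw)
  have hinner_comm : ⟪z - w, g z - g w⟫ = b := by
    rw [hb]; exact real_inner_comm _ _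
  rw [hinner_comm] at hJzw
  have hJmono : J b ≤ J S :=
    hJ_mono (Set.mem_Ici.mpr hb_pos.le) (Set.mem_Ici.mpr hS_pos.le) hb_le
  -- linear growth on the outside pair (v, z)
  obtain ⟨hL1, hL2⟩ := hg_linear v z hv (le_of_eq hzn.symm)
  rw [← ha] at hL1 hL2
  have hMa : M * a ≤ M * S := mul_le_mul_of_nonneg_left ha_le hM.le
  -- triangle inequalities
  have htri1 : ‖v - w‖ ^ 2 ≤ 2 * ‖v - z‖ ^ 2 + 2 * ‖z - w‖ ^ 2 := by
    have h5 : ‖v - w‖ ≤ ‖v - z‖ + ‖z - w‖ := norm_sub_le_norm_sub_add_norm_sub v z w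
    nlinarith [sq_nonneg (‖v - z‖ - ‖z - w‖), norm_nonneg (v - w), norm_nonneg (v - z), norm_nonneg (z - w)]
  have htri2 : ‖g v - g w‖ ^ 2 ≤ 2 * ‖g v - g z‖ ^ 2 + 2 * ‖g z - g w‖ ^ 2 := by
    have h5 : ‖g v - g w‖ ≤ ‖g v - g z‖ + ‖g z - g w‖ :=
      norm_sub_le_norm_sub_add_norm_sub (g v) (g z) (g w)
    nlinarith [sq_nonneg (‖g v - g z‖ - ‖g z - g w‖), norm_nonneg (g v - g w), norm_nonneg (g v - g z), norm_nonneg (g z - g w)]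
  have hgznn : (0:ℝ) ≤ ‖g z - g w‖ ^ 2 := by positivity
  have hznn : (0:ℝ) ≤ ‖z - w‖ ^ 2 := by positivity
  constructor
  · linarith only [htri1, hL1, hMa, hJzw, hJmono, hgznn]
  · linarith only [htri2, hL2, hMa, hJzw, hJmono, hznn]
end

section
/- Global pointwise difference estimate (displayed inequality in the proof of the paper's Theorem 3.5): Let d be a positive integer and g : ℝ^d → ℝ^d be strictly monotone on differences and have linear growth on differences with constant M > 0. Let J : [0,∞) → [0,∞) be nondecreasing with values in [0,∞) and satisfy |v − w|² + |g(v) − g(w)|² ≤ J((v − w)·(g(v) − g(w))) for all v, w ∈ ℝ^d with |v| ≤ 1 and |w| ≤ 1. Then for ALL v, w ∈ ℝ^d (with no restriction on their norms), each of the quantities |v − w|² and |g(v) − g(w)|² is at most 2M (g(v) − g(w))·(v − w) + 2 J((g(v) − g(w))·(v − w)). -/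
open scoped RealInnerProductSpace

set_option maxHeartbeats 1000000 in
/-- Global pointwise difference estimate (from the proof of the paper's Theorem 3.5). -/
theorem global_pointwise_difference_estimate
    (d : ℕ) (hd : 0 < d)
    (g : EuclideanSpace ℝ (Fin d) → EuclideanSpace ℝ (Fin d))
    (hg_monot : ∀ v w : EuclideanSpace ℝ (Fin d), v ≠ w → 0 < ⟪g v - g w, v - w⟫)
    (M : ℝ) (hM : 0 < M)
    (hg_linear : ∀ v w : EuclideanSpace ℝ (Fin d), 1 ≤ ‖v‖ → 1 ≤ ‖w‖ →
      ‖v - w‖ ^ 2 ≤ M * ⟪g v - g w, v - w⟫ ∧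
      ‖g v - g w‖ ^ 2 ≤ M * ⟪g v - g w, v - w⟫)
    (J : ℝ → ℝ)
    (hJ_mono : MonotoneOn J (Set.Ici (0 : ℝ)))
    (hJ_nonneg : ∀ s : ℝ, 0 ≤ s → 0 ≤ J s)
    (hJ : ∀ v w : EuclideanSpace ℝ (Fin d), ‖v‖ ≤ 1 → ‖w‖ ≤ 1 →
      ‖v - w‖ ^ 2 + ‖g v - g w‖ ^ 2 ≤ J ⟪v - w, g v - g w⟫) :
    ∀ v w : EuclideanSpace ℝ (Fin d),
      ‖v - w‖ ^ 2 ≤ 2 * M * ⟪g v - g w, v - w⟫ + 2 * J ⟪g v - g w, v - w⟫ ∧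
      ‖g v - g w‖ ^ 2 ≤ 2 * M * ⟪g v - g w, v - w⟫ + 2 * J ⟪g v - g w, v - w⟫ := by
  -- nonnegativity of the monotonicity pairing
  have hmono : ∀ v w : EuclideanSpace ℝ (Fin d), 0 ≤ ⟪g v - g w, v - w⟫ := by
    intro v w
    rcases eq_or_ne v w with h | h
    · simp [h]
    · exact (hg_monot v w h).le
  -- the mixed case
  have key : ∀ v w : EuclideanSpace ℝ (Fin d), ‖w‖ ≤ 1 → 1 ≤ ‖v‖ →
      ‖v - w‖ ^ 2 ≤ 2 * M * ⟪g v - g w, v - w⟫ + 2 * J ⟪g v - g w, v - w⟫ ∧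
      ‖g v - g w‖ ^ 2 ≤ 2 * M * ⟪g v - g w, v - w⟫ + 2 * J ⟪g v - g w, v - w⟫ := by
    intro v w hw hv
    -- find a point on the segment with norm 1
    have hcont : ContinuousOn (fun t : ℝ => ‖w + t • (v - w)‖) (Set.Icc 0 1) :=
      ((continuous_const.add (continuous_id.smul continuous_const)).norm).continuousOn
    have hsub := intermediate_value_Icc (le_of_lt one_pos) hcont
    have h1 : (1 : ℝ) ∈ Set.Icc ‖w + (0:ℝ) • (v - w)‖ ‖w + (1:ℝ) • (v - w)‖ := by
      simp only [zero_smul, add_zero, one_smul]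
      constructor
      · simpa using hw
      · simpa [add_sub_cancel] using hv
    obtain ⟨t, ht, hut⟩ := hsub h1
    set u : EuclideanSpace ℝ (Fin d) := w + t • (v - w) with hu_def
    have hu1 : ‖u‖ = 1 := hut
    have ht0 : 0 ≤ t := ht.1
    have ht1 : t ≤ 1 := ht.2
    have huw : u - w = t • (v - w) := by simp [hu_def]
    have hvu : v - u = (1 - t) • (v - w) := by
      rw [hu_def]; rw [sub_smul, one_smul]; abel
    set S : ℝ := ⟪g v - g w, v - w⟫ with hS_def
    have hS : 0 ≤ S := hmono v w
    -- X + Y = S where X, Y are inner products against v - w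
    have hsplit : ⟪g v - g u, v - w⟫ + ⟪g u - g w, v - w⟫ = S := by
      rw [hS_def, ← inner_add_left]
      congr 1
      abel
    -- Y ≥ 0
    have hY : 0 ≤ ⟪g u - g w, v - w⟫ := by
      rcases eq_or_ne u w with h | h
      · simp [h]
      · have h1 : 0 < ⟪g u - g w, u - w⟫ := hg_monot u w h
        rw [huw, real_inner_smul_right] at h1
        have htpos : 0 < t := by
          rcases ht0.lt_or_eq with h' | h'
          · exact h'
          · exfalso; apply h; rw [hu_def, ← h']; simp
        nlinarith
    -- X ≥ 0
    have hX : 0 ≤ ⟪g v - g u, v - w⟫ := by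
      rcases eq_or_ne v u with h | h
      · simp [h]
      · have h1 : 0 < ⟪g v - g u, v - u⟫ := hg_monot v u h
        rw [hvu, real_inner_smul_right] at h1
        have htpos : 0 < 1 - t := by
          rcases ht1.lt_or_eq with h' | h'
          · linarith
          · exfalso; apply h; rw [hu_def, h']; simp [sub_smul]
        nlinarith
    -- the two segment inner products are bounded by S
    have hA : ⟪g v - g u, v - u⟫ ≤ S := by
      rw [hvu, real_inner_smul_right]
      nlinarith [hsplit]
    have hB : ⟪g u - g w, u - w⟫ ≤ S := by
      rw [huw, real_inner_smul_right]
      nlinarith [hsplit]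
    have hA0 : 0 ≤ ⟪g v - g u, v - u⟫ := hmono v u
    have hB0 : 0 ≤ ⟪g u - g w, u - w⟫ := hmono u w
    -- linear growth on the outer piece
    obtain ⟨hL1, hL2⟩ := hg_linear v u hv (le_of_eq hu1.symm)
    -- J bound on the inner piece
    have hJuw := hJ u w (le_of_eq hu1) hw
    have hJcomm : ⟪u - w, g u - g w⟫ = ⟪g u - g w, u - w⟫ := real_inner_comm _ _
    rw [hJcomm] at hJuw
    have hJle : J ⟪g u - g w, u - w⟫ ≤ J S := hJ_mono hB0 hS hB
    have hJS : 0 ≤ J S := hJ_nonneg S hS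
    have hnw : ‖u - w‖ ^ 2 ≤ J S := by
      linarith [sq_nonneg ‖g u - g w‖]
    have hngw : ‖g u - g w‖ ^ 2 ≤ J S := by
      linarith [sq_nonneg ‖u - w‖]
    have hMA : M * ⟪g v - g u, v - u⟫ ≤ M * S := mul_le_mul_of_nonneg_left hA hM.le
    have hnv : ‖v - u‖ ^ 2 ≤ M * S := le_trans hL1 hMA
    have hngv : ‖g v - g u‖ ^ 2 ≤ M * S := le_trans hL2 hMA
    constructor
    · have htri : ‖v - w‖ ≤ ‖v - u‖ + ‖u - w‖ := by
        have h : v - w = (v - u) + (u - w) := by abel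
        rw [h]; exact norm_add_le _ _
      calc ‖v - w‖ ^ 2 ≤ (‖v - u‖ + ‖u - w‖) ^ 2 :=
            pow_le_pow_left₀ (norm_nonneg _) htri 2
        _ ≤ 2 * ‖v - u‖ ^ 2 + 2 * ‖u - w‖ ^ 2 := by
            nlinarith [sq_nonneg (‖v - u‖ - ‖u - w‖)]
        _ ≤ 2 * (M * S) + 2 * J S := by linarith
        _ = 2 * M * S + 2 * J S := by ring
    · have htri : ‖g v - g w‖ ≤ ‖g v - g u‖ + ‖g u - g w‖ := by
        have h : g v - g w = (g v - g u) + (g u - g w) := by abel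
        rw [h]; exact norm_add_le _ _
      calc ‖g v - g w‖ ^ 2 ≤ (‖g v - g u‖ + ‖g u - g w‖) ^ 2 :=
            pow_le_pow_left₀ (norm_nonneg _) htri 2
        _ ≤ 2 * ‖g v - g u‖ ^ 2 + 2 * ‖g u - g w‖ ^ 2 := by
            nlinarith [sq_nonneg (‖g v - g u‖ - ‖g u - g w‖)]
        _ ≤ 2 * (M * S) + 2 * J S := by linarith
        _ = 2 * M * S + 2 * J S := by ring
  intro v w
  set S : ℝ := ⟪g v - g w, v - w⟫ with hS_def
  have hS : 0 ≤ S := hmono v w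
  have hJS : 0 ≤ J S := hJ_nonneg S hS
  rcases le_total ‖v‖ 1 with h1 | h1 <;> rcases le_total ‖w‖ 1 with h2 | h2
  · -- both small
    have h := hJ v w h1 h2
    have hcomm : ⟪v - w, g v - g w⟫ = S := real_inner_comm _ _
    rw [hcomm] at h
    constructor
    · nlinarith [sq_nonneg ‖g v - g w‖]
    · nlinarith [sq_nonneg ‖v - w‖]
  · -- v small, w large : apply key with swapped roles
    have hsw : ⟪g w - g v, w - v⟫ = S := by
      rw [hS_def, ← neg_sub (g v) (g w), ← neg_sub v w, inner_neg_neg]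
    have h := key w v h1 h2
    rw [hsw, norm_sub_rev w v, norm_sub_rev (g w) (g v)] at h
    exact h
  · -- v large, w small
    exact key v w h2 h1
  · -- both large
    obtain ⟨hL1, hL2⟩ := hg_linear v w h1 h2
    constructor
    · nlinarith
    · nlinarith
end

section
/- Space-integrated difference estimate with Jensen's inequality (combining the paper's displayed estimates (3.26) and the subsequent Jensen step): Let (Σ, μ) be a measure space with 0 < μ(Σ) < ∞, let d be a positive integer, let g : ℝ^d → ℝ^d be strictly monotone on differences and have linear growth on differences with constant M > 0, and let J : [0,∞) → [0,∞) be nondecreasing and concave with J(0) = 0 and satisfy |v − w|² + |g(v) − g(w)|² ≤ J((v − w)·(g(v) − g(w))) for all v, w ∈ ℝ^d with |v| ≤ 1 and |w| ≤ 1. Let u₁, u₂ : Σ → ℝ^d be measurable functions such that |u₁ − u₂|² and the (pointwise nonnegative) function D := (g∘u₁ − g∘u₂)·(u₁ − u₂) are integrable. Then ∫_Σ |u₁ − u₂|² dμ ≤ 2M ∫_Σ D dμ + 2 μ(Σ) J( (1/μ(Σ)) ∫_Σ D dμ ). -/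
set_option maxHeartbeats 1000000


open scoped RealInnerProductSpace
open MeasureTheory

section Aux

variable {d : ℕ} {g : EuclideanSpace ℝ (Fin d) → EuclideanSpace ℝ (Fin d)} {M : ℝ} {J : ℝ → ℝ}

private lemma mixed_case_bound
    (hg_monot : ∀ v w : EuclideanSpace ℝ (Fin d), v ≠ w → 0 < ⟪g v - g w, v - w⟫)
    (hM : 0 < M)
    (hg_linear : ∀ v w : EuclideanSpace ℝ (Fin d), 1 ≤ ‖v‖ → 1 ≤ ‖w‖ →
      ‖v - w‖ ^ 2 ≤ M * ⟪g v - g w, v - w⟫ ∧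
      ‖g v - g w‖ ^ 2 ≤ M * ⟪g v - g w, v - w⟫)
    (hJ_mono : MonotoneOn J (Set.Ici (0 : ℝ)))
    (hJ_nonneg : ∀ s : ℝ, 0 ≤ s → 0 ≤ J s)
    (hJ : ∀ v w : EuclideanSpace ℝ (Fin d), ‖v‖ ≤ 1 → ‖w‖ ≤ 1 →
      ‖v - w‖ ^ 2 + ‖g v - g w‖ ^ 2 ≤ J ⟪v - w, g v - g w⟫)
    (v w : EuclideanSpace ℝ (Fin d)) (hv : 1 < ‖v‖) (hw : ‖w‖ ≤ 1) :
    ‖v - w‖ ^ 2 ≤ 2 * M * ⟪g v - g w, v - w⟫ + 2 * J ⟪g v - g w, v - w⟫ := by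
  have hne : v ≠ w := by
    intro h; rw [h] at hv; exact absurd hw (not_le.2 hv)
  set D : ℝ := ⟪g v - g w, v - w⟫ with hD
  have hD0 : 0 < D := hg_monot v w hne
  -- intermediate point on the segment with norm 1
  set f : ℝ → ℝ := fun t => ‖v + t • (w - v)‖ with hf_def
  have hf : Continuous f := by
    apply Continuous.norm
    exact continuous_const.add (continuous_id.smul continuous_const)
  have hf0 : f 0 = ‖v‖ := by simp [hf_def]
  have hf1 : f 1 = ‖w‖ := by
    simp only [hf_def, one_smul]
    congr 1; abel
  have h1mem : (1 : ℝ) ∈ Set.Icc (f 1) (f 0) := by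
    rw [hf0, hf1]; exact ⟨hw, hv.le⟩
  obtain ⟨t, ht, hft⟩ := intermediate_value_Icc' (by norm_num : (0:ℝ) ≤ 1)
    hf.continuousOn h1mem
  set z : EuclideanSpace ℝ (Fin d) := v + t • (w - v) with hz_def
  have hz : ‖z‖ = 1 := hft
  have ht0 : 0 ≤ t := ht.1
  have ht1 : t ≤ 1 := ht.2
  have hvz : v - z = t • (v - w) := by
    rw [hz_def]; module
  have hzw : z - w = (1 - t) • (v - w) := by
    rw [hz_def]; module
  set a : ℝ := ⟪g v - g z, v - w⟫ with ha_def
  set b : ℝ := ⟪g z - g w, v - w⟫ with hb_def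
  have hab : D = a + b := by
    rw [hD, ha_def, hb_def, ← inner_add_left]
    congr 1; abel
  have hinner_vz : ⟪g v - g z, v - z⟫ = t * a := by
    rw [hvz, real_inner_smul_right]
  have hinner_zw : ⟪g z - g w, z - w⟫ = (1 - t) * b := by
    rw [hzw, real_inner_smul_right]
  have ha0 : 0 ≤ a := by
    rcases eq_or_ne z v with h | h
    · simp [ha_def, h]
    · have htpos : 0 < t := by
        rcases ht0.lt_or_eq with h' | h'
        · exact h'
        · exfalso; apply h; rw [hz_def, ← h', zero_smul, add_zero]
      have := hg_monot v z h.symm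
      rw [hinner_vz] at this
      nlinarith
  have hb0 : 0 ≤ b := by
    rcases eq_or_ne z w with h | h
    · simp [hb_def, h]
    · have htpos : 0 < 1 - t := by
        rcases ht1.lt_or_eq with h' | h'
        · linarith
        · exfalso; apply h
          have : z - w = (1 - t) • (v - w) := hzw
          rw [h', sub_self, zero_smul] at this
          exact sub_eq_zero.1 this
      have := hg_monot z w h
      rw [hinner_zw] at this
      nlinarith
  -- the two pieces
  have hpiece1 : ‖v - z‖ ^ 2 ≤ M * ⟪g v - g z, v - z⟫ :=
    (hg_linear v z hv.le hz.ge).1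
  have hpiece2 : ‖z - w‖ ^ 2 ≤ J ⟪z - w, g z - g w⟫ := by
    have := hJ z w hz.le hw
    nlinarith [sq_nonneg ‖g z - g w‖]
  have hbound1 : ⟪g v - g z, v - z⟫ ≤ D := by
    rw [hinner_vz, hab]; nlinarith
  have hbound2 : ⟪z - w, g z - g w⟫ ≤ D := by
    rw [real_inner_comm, hinner_zw, hab]; nlinarith
  have harg0 : 0 ≤ ⟪z - w, g z - g w⟫ := by
    rw [real_inner_comm, hinner_zw]; nlinarith
  have hJle : J ⟪z - w, g z - g w⟫ ≤ J D :=
    hJ_mono (Set.mem_Ici.2 harg0) (Set.mem_Ici.2 hD0.le) hbound2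
  have htri : ‖v - w‖ ^ 2 ≤ 2 * ‖v - z‖ ^ 2 + 2 * ‖z - w‖ ^ 2 := by
    have h1 : ‖v - w‖ ≤ ‖v - z‖ + ‖z - w‖ := by
      have h2 : v - w = (v - z) + (z - w) := by abel
      rw [h2]; exact norm_add_le _ _
    nlinarith [norm_nonneg (v - z), norm_nonneg (z - w), norm_nonneg (v - w),
      sq_nonneg (‖v - z‖ - ‖z - w‖)]
  nlinarith [mul_le_mul_of_nonneg_left hbound1 hM.le]


private lemma pointwise_bound
    (hg_monot : ∀ v w : EuclideanSpace ℝ (Fin d), v ≠ w → 0 < ⟪g v - g w, v - w⟫)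
    (hM : 0 < M)
    (hg_linear : ∀ v w : EuclideanSpace ℝ (Fin d), 1 ≤ ‖v‖ → 1 ≤ ‖w‖ →
      ‖v - w‖ ^ 2 ≤ M * ⟪g v - g w, v - w⟫ ∧
      ‖g v - g w‖ ^ 2 ≤ M * ⟪g v - g w, v - w⟫)
    (hJ_mono : MonotoneOn J (Set.Ici (0 : ℝ)))
    (hJ_nonneg : ∀ s : ℝ, 0 ≤ s → 0 ≤ J s)
    (hJ : ∀ v w : EuclideanSpace ℝ (Fin d), ‖v‖ ≤ 1 → ‖w‖ ≤ 1 →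
      ‖v - w‖ ^ 2 + ‖g v - g w‖ ^ 2 ≤ J ⟪v - w, g v - g w⟫)
    (v w : EuclideanSpace ℝ (Fin d)) :
    ‖v - w‖ ^ 2 ≤ 2 * M * ⟪g v - g w, v - w⟫ + 2 * J ⟪g v - g w, v - w⟫ := by
  have hD0 : 0 ≤ ⟪g v - g w, v - w⟫ := by
    rcases eq_or_ne v w with h | h
    · simp [h]
    · exact (hg_monot v w h).le
  rcases le_or_gt ‖v‖ 1 with h1 | h1 <;> rcases le_or_gt ‖w‖ 1 with h2 | h2
  · -- both small
    have hJv := hJ v w h1 h2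
    rw [real_inner_comm] at hJv
    nlinarith [hJ_nonneg _ hD0, mul_nonneg hM.le hD0, sq_nonneg ‖g v - g w‖]
  · -- v small, w large: symmetric mixed case
    have hsym : ⟪g w - g v, w - v⟫ = ⟪g v - g w, v - w⟫ := by
      rw [← neg_sub (g v) (g w), ← neg_sub v w, inner_neg_neg]
    have := mixed_case_bound hg_monot hM hg_linear hJ_mono hJ_nonneg hJ w v h2 h1
    rw [hsym, norm_sub_rev] at this
    exact this
  · -- v large, w small: mixed case
    exact mixed_case_bound hg_monot hM hg_linear hJ_mono hJ_nonneg hJ v w h1 h2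
  · -- both large
    have := (hg_linear v w h1.le h2.le).1
    nlinarith [hJ_nonneg _ hD0, mul_nonneg hM.le hD0]

end Aux

/-- Space-integrated difference estimate with Jensen's inequality
(paper's estimates (3.26) plus the Jensen step). -/
theorem integrated_difference_estimate_jensen
    {S : Type*} [MeasurableSpace S] (μ : Measure S)
    (hμ_pos : 0 < μ Set.univ) (hμ_fin : μ Set.univ < ⊤)
    (d : ℕ) (hd : 0 < d)
    (g : EuclideanSpace ℝ (Fin d) → EuclideanSpace ℝ (Fin d))
    (hg_monot : ∀ v w : EuclideanSpace ℝ (Fin d), v ≠ w → 0 < ⟪g v - g w, v - w⟫)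
    (M : ℝ) (hM : 0 < M)
    (hg_linear : ∀ v w : EuclideanSpace ℝ (Fin d), 1 ≤ ‖v‖ → 1 ≤ ‖w‖ →
      ‖v - w‖ ^ 2 ≤ M * ⟪g v - g w, v - w⟫ ∧
      ‖g v - g w‖ ^ 2 ≤ M * ⟪g v - g w, v - w⟫)
    (J : ℝ → ℝ)
    (hJ_mono : MonotoneOn J (Set.Ici (0 : ℝ)))
    (hJ_concave : ConcaveOn ℝ (Set.Ici (0 : ℝ)) J)
    (hJ_nonneg : ∀ s : ℝ, 0 ≤ s → 0 ≤ J s)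
    (hJ_zero : J 0 = 0)
    (hJ : ∀ v w : EuclideanSpace ℝ (Fin d), ‖v‖ ≤ 1 → ‖w‖ ≤ 1 →
      ‖v - w‖ ^ 2 + ‖g v - g w‖ ^ 2 ≤ J ⟪v - w, g v - g w⟫)
    (u₁ u₂ : S → EuclideanSpace ℝ (Fin d))
    (hu₁ : Measurable u₁) (hu₂ : Measurable u₂)
    (hInt_sq : Integrable (fun x => ‖u₁ x - u₂ x‖ ^ 2) μ)
    (hInt_D : Integrable (fun x => ⟪g (u₁ x) - g (u₂ x), u₁ x - u₂ x⟫) μ) :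
    ∫ x, ‖u₁ x - u₂ x‖ ^ 2 ∂μ
      ≤ 2 * M * ∫ x, ⟪g (u₁ x) - g (u₂ x), u₁ x - u₂ x⟫ ∂μ
        + 2 * (μ Set.univ).toReal *
            J ((1 / (μ Set.univ).toReal) *
                 ∫ x, ⟪g (u₁ x) - g (u₂ x), u₁ x - u₂ x⟫ ∂μ) := by
  haveI : IsFiniteMeasure μ := ⟨hμ_fin⟩
  set μr : ℝ := (μ Set.univ).toReal with hμr_def
  have hμr : 0 < μr := ENNReal.toReal_pos hμ_pos.ne' hμ_fin.ne
  set Df : S → ℝ := fun x => ⟪g (u₁ x) - g (u₂ x), u₁ x - u₂ x⟫ with hDf_def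
  have hDnn : ∀ x, 0 ≤ Df x := by
    intro x
    rcases eq_or_ne (u₁ x) (u₂ x) with h | h
    · simp [hDf_def, h]
    · exact (hg_monot _ _ h).le
  have hpt : ∀ x, ‖u₁ x - u₂ x‖ ^ 2 ≤ 2 * M * Df x + 2 * J (Df x) := fun x =>
    pointwise_bound hg_monot hM hg_linear hJ_mono hJ_nonneg hJ (u₁ x) (u₂ x)
  set I : ℝ := ∫ x, Df x ∂μ with hI_def
  have hI0 : 0 ≤ I := integral_nonneg hDnn
  rcases hI0.lt_or_eq with hIpos | hIzero
  · -- positive average: Jensen via supergradient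
    set m : ℝ := 1 / μr * I with hm_def
    have hm0 : 0 < m := by
      rw [hm_def]; positivity
    set T : Set ℝ := {r : ℝ | ∃ s : ℝ, m < s ∧ r = (J s - J m) / (s - m)} with hT_def
    have hTne : T.Nonempty := ⟨(J (m + 1) - J m) / (m + 1 - m), m + 1, by linarith, rfl⟩
    have hTbdd : BddAbove T := by
      refine ⟨(J m - J 0) / (m - 0), ?_⟩
      rintro r ⟨s, hs, rfl⟩
      exact hJ_concave.slope_anti_adjacent (Set.mem_Ici.2 le_rfl)
        (Set.mem_Ici.2 (by linarith)) hm0 hs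
    set c : ℝ := sSup T with hc_def
    have key : ∀ s : ℝ, 0 ≤ s → J s ≤ J m + c * s - c * m := by
      intro s hs
      rcases lt_trichotomy s m with h | h | h
      · have hle : c ≤ (J m - J s) / (m - s) := by
          apply csSup_le hTne
          rintro r ⟨s', hs', rfl⟩
          exact hJ_concave.slope_anti_adjacent (Set.mem_Ici.2 hs)
            (Set.mem_Ici.2 (by linarith)) h hs'
        have := (le_div_iff₀ (by linarith : (0:ℝ) < m - s)).1 hle
        nlinarith
      · subst h; simp
      · have hle : (J s - J m) / (s - m) ≤ c := le_csSup hTbdd ⟨s, h, rfl⟩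
        have := (div_le_iff₀ (by linarith : (0:ℝ) < s - m)).1 hle
        nlinarith
    have hpt2 : ∀ x, ‖u₁ x - u₂ x‖ ^ 2
        ≤ (2 * M + 2 * c) * Df x + (2 * J m - 2 * c * m) := by
      intro x
      have h1 := hpt x
      have h2 := key (Df x) (hDnn x)
      nlinarith
    have hIntR : Integrable (fun x => (2 * M + 2 * c) * Df x + (2 * J m - 2 * c * m)) μ :=
      (hInt_D.const_mul _).add (integrable_const _)
    have hmono := integral_mono hInt_sq hIntR hpt2
    rw [integral_add (hInt_D.const_mul _) (integrable_const _), integral_const_mul,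
      integral_const, smul_eq_mul] at hmono
    have heq : (2 * M + 2 * c) * I + μr * (2 * J m - 2 * c * m)
        = 2 * M * I + 2 * μr * J m := by
      rw [hm_def]; field_simp; ring
    calc ∫ x, ‖u₁ x - u₂ x‖ ^ 2 ∂μ
        ≤ (2 * M + 2 * c) * I + μr * (2 * J m - 2 * c * m) := hmono
      _ = 2 * M * I + 2 * μr * J m := heq
  · -- zero average: then u₁ = u₂ a.e.
    have hDzero : Df =ᵐ[μ] 0 :=
      (integral_eq_zero_iff_of_nonneg hDnn hInt_D).1 hIzero.symm
    have hsq : (fun x => ‖u₁ x - u₂ x‖ ^ 2) =ᵐ[μ] 0 := by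
      filter_upwards [hDzero] with x hx
      have : u₁ x = u₂ x := by
        by_contra h
        exact (hg_monot _ _ h).ne' hx
      simp [this]
    rw [integral_eq_zero_of_ae hsq, ← hIzero]
    simp [hJ_zero]
end

section
/- Coercivity at infinity of the auxiliary function h (claim proved inside the paper's Lemma 3.2): Let d be a positive integer, M > 0, and g : ℝ^d → ℝ^d a function such that |v − w|² ≤ M (g(v) − g(w))·(v − w) for all v, w ∈ ℝ^d with |v| ≥ 1 and |w| ≥ 1. Then for every v ∈ ℝ^d with |v| ≤ 1 and every e ∈ ℝ^d with |e| = 1, the function h(s) = s e·(g(v + s e) − g(v)) tends to +∞ as s → ∞. -/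
open scoped RealInnerProductSpace
open Filter

/-!
Both `v + s • e` (for `s ≥ 2`) and the fixed point `v + 2 • e` lie outside the open unit ball, so
the hypothesis on `g` applies to them. Since their difference is `(s - 2) • e`, it yields
`⟪e, g (v + s • e) - g (v + 2 • e)⟫ ≥ (s - 2) / M`, hence `⟪e, g (v + s • e) - g v⟫` grows at least
linearly in `s`, and so does `s` times it.
-/

theorem one_le_norm_add_smul {F : Type*} [SeminormedAddCommGroup F] [NormedSpace ℝ F]
    {v e : F} {s : ℝ} (hv : ‖v‖ ≤ 1) (he : ‖e‖ = 1) (hs : 2 ≤ s) : 1 ≤ ‖v + s • e‖ :=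
  calc 1 ≤ ‖s • e‖ - ‖v‖ := by rw [norm_smul, he, Real.norm_of_nonneg (by linarith)]; linarith
    _ ≤ ‖v + s • e‖ := by simpa [add_comm] using norm_sub_norm_le (s • e) (-v)

section InnerProductSpace

variable {E : Type*} [NormedAddCommGroup E] [InnerProductSpace ℝ E]

theorem le_mul_inner_of_sq_norm_smul_le {a e : E} {t M : ℝ} (he : ‖e‖ = 1) (ht : 0 < t)
    (h : ‖t • e‖ ^ 2 ≤ M * ⟪a, t • e⟫) : t ≤ M * ⟪a, e⟫ := by
  rw [norm_smul, he, mul_one, Real.norm_eq_abs, sq_abs, inner_smul_right] at h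
  nlinarith

theorem tendsto_inner_sub_atTop {M : ℝ} (hM : 0 < M) {g : E → E}
    (hg : ∀ v w : E, 1 ≤ ‖v‖ → 1 ≤ ‖w‖ → ‖v - w‖ ^ 2 ≤ M * ⟪g v - g w, v - w⟫)
    {v e : E} (hv : ‖v‖ ≤ 1) (he : ‖e‖ = 1) :
    Tendsto (fun s : ℝ => ⟪e, g (v + s • e) - g v⟫) atTop atTop := by
  set w := v + (2 : ℝ) • e
  set c := ⟪e, g w - g v⟫
  have hbound : ∀ᶠ s : ℝ in atTop, (s - 2) / M + c ≤ ⟪e, g (v + s • e) - g v⟫ := by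
    filter_upwards [eventually_gt_atTop 2] with s hs
    have hdiff : v + s • e - w = (s - 2) • e := by rw [sub_smul, add_sub_add_left_eq_sub]
    have hray : s - 2 ≤ M * ⟪g (v + s • e) - g w, e⟫ := by
      refine le_mul_inner_of_sq_norm_smul_le he (by linarith) ?_
      rw [← hdiff]
      exact hg _ _ (one_le_norm_add_smul hv he hs.le) (one_le_norm_add_smul hv he le_rfl)
    calc (s - 2) / M + c ≤ ⟪g (v + s • e) - g w, e⟫ + c := by
          gcongr; rwa [div_le_iff₀' hM]
      _ = ⟪e, g (v + s • e) - g v⟫ := by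
          rw [real_inner_comm, ← inner_add_right, sub_add_sub_cancel]
  refine tendsto_atTop_mono' _ hbound (tendsto_atTop_add_const_right _ c ?_)
  exact (tendsto_atTop_add_const_right _ (-2) tendsto_id).atTop_div_const hM

end InnerProductSpace

theorem auxiliary_h_tendsto_atTop_general
    (d : ℕ)
    (M : ℝ) (hM : 0 < M)
    (g : EuclideanSpace ℝ (Fin d) → EuclideanSpace ℝ (Fin d))
    (hg_linear : ∀ v w : EuclideanSpace ℝ (Fin d), 1 ≤ ‖v‖ → 1 ≤ ‖w‖ →
      ‖v - w‖ ^ 2 ≤ M * ⟪g v - g w, v - w⟫)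
    (v e : EuclideanSpace ℝ (Fin d)) (hv : ‖v‖ ≤ 1) (he : ‖e‖ = 1) :
    Filter.Tendsto (fun s : ℝ => s * ⟪e, g (v + s • e) - g v⟫)
      Filter.atTop Filter.atTop :=
  tendsto_id.atTop_mul_atTop₀ (tendsto_inner_sub_atTop hM hg_linear hv he)

/-- Coercivity at infinity of the auxiliary function `h` (from the proof of the
paper's Lemma 3.2). -/
theorem auxiliary_h_tendsto_atTop
    (d : ℕ) (hd : 0 < d)
    (M : ℝ) (hM : 0 < M)
    (g : EuclideanSpace ℝ (Fin d) → EuclideanSpace ℝ (Fin d))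
    (hg_linear : ∀ v w : EuclideanSpace ℝ (Fin d), 1 ≤ ‖v‖ → 1 ≤ ‖w‖ →
      ‖v - w‖ ^ 2 ≤ M * ⟪g v - g w, v - w⟫)
    (v e : EuclideanSpace ℝ (Fin d)) (hv : ‖v‖ ≤ 1) (he : ‖e‖ = 1) :
    Filter.Tendsto (fun s : ℝ => s * ⟪e, g (v + s • e) - g v⟫)
      Filter.atTop Filter.atTop :=
  auxiliary_h_tendsto_atTop_general d M hM g hg_linear v e hv he
end

section
/- Coercivity of the p-power-law vector field (the vector-calculus inequality asserted in the 'superlinear growth' example of Section 3.2): Let p > 2 be a real number and d a positive integer. Then for all v, w ∈ ℝ^d (with the convention that |v|^{p−2} v denotes the zero vector when v = 0), (v − w)·(|v|^{p−2} v − |w|^{p−2} w) ≥ 2^{2−p} |v − w|^p. -/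
open scoped RealInnerProductSpace

/-- Superadditivity of `x ^ r` for `r ≥ 1` on nonnegative reals. -/
lemma aux_rpow_super {a b r : ℝ} (ha : 0 ≤ a) (hb : 0 ≤ b) (hr : 1 ≤ r) :
    a ^ r + b ^ r ≤ (a + b) ^ r := by
  have h := NNReal.add_rpow_le_rpow_add a.toNNReal b.toNNReal hr
  have h' := NNReal.coe_le_coe.2 h
  simpa [NNReal.coe_rpow, NNReal.coe_add, Real.coe_toNNReal a ha,
    Real.coe_toNNReal b hb] using h'

/-- Two-point convexity of `x ^ r` for `r ≥ 1` on nonnegative reals. -/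
lemma aux_rpow_conv {a b r : ℝ} (ha : 0 ≤ a) (hb : 0 ≤ b) (hr : 1 ≤ r) :
    (a + b) ^ r ≤ 2 ^ (r - 1) * (a ^ r + b ^ r) := by
  have h := NNReal.rpow_add_le_mul_rpow_add_rpow a.toNNReal b.toNNReal hr
  have h' := NNReal.coe_le_coe.2 h
  simpa [NNReal.coe_rpow, NNReal.coe_add, NNReal.coe_mul, Real.coe_toNNReal a ha,
    Real.coe_toNNReal b hb] using h'

/-- first endpoint inequality (collinear, same direction case). -/
lemma aux_end1 (p : ℝ) (hp : 2 < p) {a b : ℝ} (hb : 0 ≤ b) (hba : b ≤ a) :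
    (2 : ℝ) ^ (2 - p) * ((a - b) ^ 2) ^ (p / 2) ≤ (a - b) * (a ^ (p - 1) - b ^ (p - 1)) := by
  have hab : (0 : ℝ) ≤ a - b := by linarith
  have habs : ((a - b) ^ 2) ^ (p / 2) = (a - b) ^ p := by
    rw [← Real.rpow_natCast (a - b) 2, ← Real.rpow_mul hab]
    norm_num
    congr 1
    ring
  have hsup : b ^ (p - 1) + (a - b) ^ (p - 1) ≤ a ^ (p - 1) := by
    have := aux_rpow_super hb hab (r := p - 1) (by linarith)
    simpa using this
  have hC1 : (2 : ℝ) ^ (2 - p) ≤ 1 :=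
    Real.rpow_le_one_of_one_le_of_nonpos (by norm_num) (by linarith)
  have hC0 : (0 : ℝ) ≤ (2 : ℝ) ^ (2 - p) := Real.rpow_nonneg (by norm_num) _
  have hpow : (a - b) ^ p = (a - b) ^ (p - 1) * (a - b) := by
    rw [show p = (p - 1) + 1 by ring, Real.rpow_add' hab (by ring_nf; linarith), Real.rpow_one]
    ring_nf
  have h1 : (a - b) ^ (p - 1) * (a - b) ≤ (a ^ (p - 1) - b ^ (p - 1)) * (a - b) :=
    mul_le_mul_of_nonneg_right (by linarith) hab
  have h2 : (2 : ℝ) ^ (2 - p) * (a - b) ^ p ≤ (a - b) ^ p := by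
    nlinarith [Real.rpow_nonneg hab p]
  rw [habs]
  nlinarith

/-- second endpoint inequality (collinear, opposite direction case). -/
lemma aux_end2 (p : ℝ) (hp : 2 < p) {a b : ℝ} (ha : 0 ≤ a) (hb : 0 ≤ b) :
    (2 : ℝ) ^ (2 - p) * ((a + b) ^ 2) ^ (p / 2) ≤ (a + b) * (a ^ (p - 1) + b ^ (p - 1)) := by
  have hab : (0 : ℝ) ≤ a + b := by linarith
  have habs : ((a + b) ^ 2) ^ (p / 2) = (a + b) ^ p := by
    rw [← Real.rpow_natCast (a + b) 2, ← Real.rpow_mul hab]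
    norm_num
    congr 1
    ring
  have hconv : (a + b) ^ (p - 1) ≤ 2 ^ (p - 2) * (a ^ (p - 1) + b ^ (p - 1)) := by
    have := aux_rpow_conv ha hb (r := p - 1) (by linarith)
    calc (a + b) ^ (p - 1) ≤ 2 ^ (p - 1 - 1) * (a ^ (p - 1) + b ^ (p - 1)) := this
      _ = 2 ^ (p - 2) * (a ^ (p - 1) + b ^ (p - 1)) := by ring_nf
  have hpow : (a + b) ^ p = (a + b) ^ (p - 1) * (a + b) := by
    rw [show p = (p - 1) + 1 by ring, Real.rpow_add' hab (by ring_nf; linarith), Real.rpow_one]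
    ring_nf
  have hmul : (2 : ℝ) ^ (2 - p) * 2 ^ (p - 2) = 1 := by
    rw [← Real.rpow_add (by norm_num : (0:ℝ) < 2)]
    norm_num
  have hC0 : (0 : ℝ) ≤ (2 : ℝ) ^ (2 - p) := Real.rpow_nonneg (by norm_num) _
  rw [habs, hpow]
  calc (2 : ℝ) ^ (2 - p) * ((a + b) ^ (p - 1) * (a + b))
      ≤ (2 : ℝ) ^ (2 - p) * (2 ^ (p - 2) * (a ^ (p - 1) + b ^ (p - 1)) * (a + b)) := by
        apply mul_le_mul_of_nonneg_left _ hC0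
        exact mul_le_mul_of_nonneg_right hconv hab
    _ = (a + b) * (a ^ (p - 1) + b ^ (p - 1)) := by
        rw [show (2 : ℝ) ^ (2 - p) * (2 ^ (p - 2) * (a ^ (p - 1) + b ^ (p - 1)) * (a + b))
          = ((2 : ℝ) ^ (2 - p) * 2 ^ (p - 2)) * ((a ^ (p - 1) + b ^ (p - 1)) * (a + b)) by ring,
          hmul]
        ring

/-- Scalar key lemma. -/
lemma aux_key (p : ℝ) (hp : 2 < p) {a b t : ℝ} (ha : 0 ≤ a) (hb : 0 ≤ b)
    (ht : |t| ≤ a * b) :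
    2 ^ (2 - p) * (a ^ 2 + b ^ 2 - 2 * t) ^ (p / 2)
      ≤ a ^ (p - 2) * a ^ 2 + b ^ (p - 2) * b ^ 2 - (a ^ (p - 2) + b ^ (p - 2)) * t := by
  rw [abs_le] at ht
  obtain ⟨ht1, ht2⟩ := ht
  have hC0 : (0 : ℝ) ≤ (2 : ℝ) ^ (2 - p) := Real.rpow_nonneg (by norm_num) _
  have hB0 : (0 : ℝ) ≤ (a ^ (p - 2) + b ^ (p - 2)) / 2 := by positivity
  -- concavity of affine minus power
  have hconc : ConcaveOn ℝ (Set.Ici (0 : ℝ))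
      ((((fun u : ℝ => ((a ^ (p - 2) + b ^ (p - 2)) / 2) • id u)
          + fun _ : ℝ => a ^ (p - 2) * a ^ 2 + b ^ (p - 2) * b ^ 2
              - (a ^ (p - 2) + b ^ (p - 2)) * (a ^ 2 + b ^ 2) / 2)
        - fun u : ℝ => ((2 : ℝ) ^ (2 - p)) • u ^ (p / 2))) := by
    refine ConcaveOn.sub ?_ ?_
    · exact (((concaveOn_id (convex_Ici (0 : ℝ))).smul hB0).add_const _)
    · exact (convexOn_rpow (by linarith : (1 : ℝ) ≤ p / 2)).smul hC0
  have hu01 : ((a - b) ^ 2 : ℝ) ≤ (a + b) ^ 2 := by nlinarith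
  have hmem : (a ^ 2 + b ^ 2 - 2 * t) ∈ segment ℝ ((a - b) ^ 2) ((a + b) ^ 2) := by
    rw [segment_eq_Icc hu01]
    constructor <;> nlinarith
  have hu0 : ((a - b) ^ 2 : ℝ) ∈ Set.Ici (0 : ℝ) := Set.mem_Ici.2 (sq_nonneg _)
  have hu1 : ((a + b) ^ 2 : ℝ) ∈ Set.Ici (0 : ℝ) := Set.mem_Ici.2 (sq_nonneg _)
  have hmin := hconc.ge_on_segment hu0 hu1 hmem
  simp only [Pi.sub_apply, Pi.add_apply, smul_eq_mul, id_eq] at hmin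
  -- rpow identities
  have hap : a ^ (p - 1) = a ^ (p - 2) * a := by
    rw [show p - 1 = (p - 2) + 1 by ring, Real.rpow_add' ha (by linarith), Real.rpow_one]
  have hbp : b ^ (p - 1) = b ^ (p - 2) * b := by
    rw [show p - 1 = (p - 2) + 1 by ring, Real.rpow_add' hb (by linarith), Real.rpow_one]
  -- endpoint 1
  have hend1 : (2 : ℝ) ^ (2 - p) * ((a - b) ^ 2) ^ (p / 2)
      ≤ (a - b) * (a ^ (p - 1) - b ^ (p - 1)) := by
    rcases le_total b a with h | h
    · exact aux_end1 p hp hb h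
    · have := aux_end1 p hp ha h
      have hsq : ((b - a) ^ 2 : ℝ) = (a - b) ^ 2 := by ring
      rw [hsq] at this
      nlinarith [this]
  -- endpoint 2
  have hend2 := aux_end2 p hp ha hb
  -- combine
  have hg0 : (0 : ℝ) ≤ ((a ^ (p - 2) + b ^ (p - 2)) / 2) * ((a - b) ^ 2)
      + (a ^ (p - 2) * a ^ 2 + b ^ (p - 2) * b ^ 2
          - (a ^ (p - 2) + b ^ (p - 2)) * (a ^ 2 + b ^ 2) / 2)
      - (2 : ℝ) ^ (2 - p) * ((a - b) ^ 2) ^ (p / 2) := by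
    have he : ((a ^ (p - 2) + b ^ (p - 2)) / 2) * ((a - b) ^ 2)
        + (a ^ (p - 2) * a ^ 2 + b ^ (p - 2) * b ^ 2
            - (a ^ (p - 2) + b ^ (p - 2)) * (a ^ 2 + b ^ 2) / 2)
        = (a - b) * (a ^ (p - 1) - b ^ (p - 1)) := by
      rw [hap, hbp]; ring
    rw [he]; linarith
  have hg1 : (0 : ℝ) ≤ ((a ^ (p - 2) + b ^ (p - 2)) / 2) * ((a + b) ^ 2)
      + (a ^ (p - 2) * a ^ 2 + b ^ (p - 2) * b ^ 2
          - (a ^ (p - 2) + b ^ (p - 2)) * (a ^ 2 + b ^ 2) / 2)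
      - (2 : ℝ) ^ (2 - p) * ((a + b) ^ 2) ^ (p / 2) := by
    have he : ((a ^ (p - 2) + b ^ (p - 2)) / 2) * ((a + b) ^ 2)
        + (a ^ (p - 2) * a ^ 2 + b ^ (p - 2) * b ^ 2
            - (a ^ (p - 2) + b ^ (p - 2)) * (a ^ 2 + b ^ 2) / 2)
        = (a + b) * (a ^ (p - 1) + b ^ (p - 1)) := by
      rw [hap, hbp]; ring
    rw [he]; linarith
  have := le_trans (le_min hg0 hg1) hmin
  linarith

/-- Coercivity of the p-power-law vector field (superlinear growth example of
Section 3.2): `(v − w)·(|v|^{p−2} v − |w|^{p−2} w) ≥ 2^{2−p} |v − w|^p`. -/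
theorem power_law_coercivity
    (p : ℝ) (hp : 2 < p) (d : ℕ) (hd : 0 < d)
    (v w : EuclideanSpace ℝ (Fin d)) :
    (2 : ℝ) ^ (2 - p) * ‖v - w‖ ^ p
      ≤ ⟪v - w, (‖v‖ ^ (p - 2)) • v - (‖w‖ ^ (p - 2)) • w⟫ := by
  have h1 : ‖v - w‖ ^ p = (‖v‖ ^ 2 + ‖w‖ ^ 2 - 2 * ⟪v, w⟫) ^ (p / 2) := by
    rw [show ‖v‖ ^ 2 + ‖w‖ ^ 2 - 2 * ⟪v, w⟫ = ‖v - w‖ ^ 2 by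
      linarith [norm_sub_sq_real v w]]
    rw [← Real.rpow_natCast ‖v - w‖ 2, ← Real.rpow_mul (norm_nonneg _)]
    norm_num
    congr 1
    ring
  have h2 : ⟪v - w, (‖v‖ ^ (p - 2)) • v - (‖w‖ ^ (p - 2)) • w⟫
      = ‖v‖ ^ (p - 2) * ‖v‖ ^ 2 + ‖w‖ ^ (p - 2) * ‖w‖ ^ 2
        - (‖v‖ ^ (p - 2) + ‖w‖ ^ (p - 2)) * ⟪v, w⟫ := by
    simp only [inner_sub_left, inner_sub_right, real_inner_smul_right,
      real_inner_self_eq_norm_sq, real_inner_comm w v]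
    ring
  rw [h1, h2]
  exact aux_key p hp (norm_nonneg v) (norm_nonneg w) (abs_real_inner_le_norm v w)
end
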